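/- arXiv:1009.2937 — 5 statements merged into one kernel-verified Lean document; each statement's English description precedes it below -/
import Mathlib

section
/- Let n ≥ 1 and x ≥ n be integers. In the multi-jeep model with exactly n jeeps (no helpers), none of which is required to return, there is a plan with x tankloads after which every jeep has reached position 1 + Σ_{k=1}^{x−n} 1/(n+2k); that is, n jeeps can all cross a desert of this width one way using x tankloads. -/
/-- A state of the multi-jeep model with `N` jeeps: each jeep's position and
tank content, and a finitely supported function recording the fuel stored in
depots. -/
structure MultiState (N : ℕ) where
  pos : Fin N → ℝ
  tank : Fin N → ℝ
  depot : ℝ →₀ ℝ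

/-- Admissible moves of the multi-jeep model: one jeep drives (consuming one
tankload of fuel per unit of distance), or fuel is moved between the tank of a
jeep and the depot at its position, or between the tanks of two jeeps at the
same position; tank contents stay in `[0,1]` and depots stay nonnegative. -/
inductive MultiStep {N : ℕ} : MultiState N → MultiState N → Prop
  | drive (s : MultiState N) (i : Fin N) (p' : ℝ)
      (h : 0 ≤ s.tank i - |p' - s.pos i|) :
      MultiStep s ⟨Function.update s.pos i p',
        Function.update s.tank i (s.tank i - |p' - s.pos i|), s.depot⟩
  | transferDepot (s : MultiState N) (i : Fin N) (t' : ℝ) (D' : ℝ →₀ ℝ)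
      (hcons : t' + D' (s.pos i) = s.tank i + s.depot (s.pos i))
      (ht0 : 0 ≤ t') (ht1 : t' ≤ 1)
      (hD : ∀ q, 0 ≤ D' q)
      (heq : ∀ q, q ≠ s.pos i → D' q = s.depot q) :
      MultiStep s ⟨s.pos, Function.update s.tank i t', D'⟩
  | transferJeep (s : MultiState N) (i j : Fin N) (hij : i ≠ j)
      (hpos : s.pos i = s.pos j) (ti' tj' : ℝ)
      (hcons : ti' + tj' = s.tank i + s.tank j)
      (hi0 : 0 ≤ ti') (hi1 : ti' ≤ 1) (hj0 : 0 ≤ tj') (hj1 : tj' ≤ 1) :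
      MultiStep s ⟨s.pos,
        Function.update (Function.update s.tank i ti') j tj', s.depot⟩

/-- The initial state of a plan with `x` tankloads: all jeeps at position `0`
with empty tanks, and `x` tankloads of fuel at position `0`. -/
noncomputable def multiInit (N : ℕ) (x : ℝ) : MultiState N :=
  ⟨fun _ => 0, fun _ => 0, Finsupp.single 0 x⟩
/-! ### Auxiliary development -/

def MJReach {N : ℕ} : MultiState N → MultiState N → Prop :=
  Relation.ReflTransGen MultiStep

lemma mjstep_drive {N : ℕ} (s : MultiState N) (i : Fin N) (p' : ℝ)
    (h : |p' - s.pos i| ≤ s.tank i)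
    {pos' : Fin N → ℝ} {tank' : Fin N → ℝ}
    (hp : pos' = Function.update s.pos i p')
    (ht : tank' = Function.update s.tank i (s.tank i - |p' - s.pos i|)) :
    MultiStep s ⟨pos', tank', s.depot⟩ := by
  subst hp ht; exact .drive s i p' (by linarith)

lemma mjstep_transfer {N : ℕ} (s : MultiState N) (i : Fin N) (t' : ℝ) (D' : ℝ →₀ ℝ)
    (hcons : t' + D' (s.pos i) = s.tank i + s.depot (s.pos i))
    (ht0 : 0 ≤ t') (ht1 : t' ≤ 1)
    (hD : ∀ q, 0 ≤ D' q)
    (heq : ∀ q, q ≠ s.pos i → D' q = s.depot q)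
    {tank' : Fin N → ℝ}
    (ht : tank' = Function.update s.tank i t') :
    MultiStep s ⟨s.pos, tank', D'⟩ := by
  subst ht; exact .transferDepot s i t' D' hcons ht0 ht1 hD heq

/-- One round trip of jeep `i`: take a full tankload at `p`, drive to `p+d`,
deposit `1-2d`, drive back. -/
lemma mj_trip {N : ℕ} (i : Fin N) (p d : ℝ) (hd : 0 < d) (hd2 : 2*d ≤ 1)
    (D : ℝ →₀ ℝ) (hD : ∀ q, 0 ≤ D q) (hDp : 1 ≤ D p) :
    MJReach (⟨fun _ => p, fun _ => 0, D⟩ : MultiState N)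
      ⟨fun _ => p, fun _ => 0,
        D - Finsupp.single p 1 + Finsupp.single (p+d) (1-2*d)⟩ := by
  set D1 : ℝ →₀ ℝ := D - Finsupp.single p 1 with hD1
  set D2 : ℝ →₀ ℝ := D1 + Finsupp.single (p+d) (1-2*d) with hD2
  have hD1app : ∀ q, D1 q = D q - (if p = q then 1 else 0) := by
    intro q; rw [hD1, Finsupp.sub_apply, Finsupp.single_apply]
  have hD1nn : ∀ q, 0 ≤ D1 q := by
    intro q; rw [hD1app]; split_ifs with h
    · subst h; linarith
    · simpa using hD q
  have hD2app : ∀ q, D2 q = D1 q + (if p + d = q then 1 - 2*d else 0) := by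
    intro q; rw [hD2, Finsupp.add_apply, Finsupp.single_apply]
  have hD2nn : ∀ q, 0 ≤ D2 q := by
    intro q; rw [hD2app]; have := hD1nn q; split_ifs <;> linarith
  have hne : p + d ≠ p := by intro h; nlinarith [h]
  -- step 1 : fill tank of i to 1
  refine Relation.ReflTransGen.head
    (mjstep_transfer _ i 1 D1 ?_ (by norm_num) le_rfl hD1nn ?_
      (tank' := Function.update (fun _ => 0) i 1) rfl) ?_
  · rw [hD1app]; simp
  · intro q hq
    replace hq : q ≠ p := hq
    rw [hD1app, if_neg (fun h => hq h.symm)]; ring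
  -- step 2 : drive to p + d
  refine Relation.ReflTransGen.head
    (mjstep_drive _ i (p+d) ?_ (pos' := Function.update (fun _ => p) i (p+d))
      (tank' := Function.update (fun _ => 0) i (1-d)) rfl ?_) ?_
  · simp [abs_of_pos hd]; linarith
  · funext q; by_cases h : q = i <;> simp [Function.update, h, abs_of_pos hd]
  -- step 3 : deposit 1 - 2d, keeping d
  refine Relation.ReflTransGen.head
    (mjstep_transfer _ i d D2 ?_ (le_of_lt hd) (by linarith) hD2nn ?_
      (tank' := Function.update (fun _ => 0) i d) ?_) ?_
  · rw [hD2app]; simp; ring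
  · intro q hq
    replace hq : q ≠ p + d := by simpa using hq
    rw [hD2app, if_neg (fun h => hq h.symm), add_zero]
  · funext q; by_cases h : q = i <;> simp [Function.update, h]
  -- step 4 : drive back to p
  refine Relation.ReflTransGen.head
    (mjstep_drive _ i p ?_ (pos' := fun _ => p) (tank' := fun _ => 0) ?_ ?_) ?_
  · simp [abs_of_pos hd, abs_sub_comm]
  · funext q; by_cases h : q = i <;> simp [Function.update, h]
  · funext q; by_cases h : q = i <;> simp [Function.update, h, abs_sub_comm, abs_of_pos hd]
  exact Relation.ReflTransGen.refl

/-- `k` round trips from a single depot of size `a` at `p`. -/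
lemma mj_trips {N : ℕ} (i : Fin N) (p d : ℝ) (hd : 0 < d) (hd2 : 2*d ≤ 1)
    (a : ℝ) (k : ℕ) (hk : (k : ℝ) ≤ a) :
    MJReach (⟨fun _ => p, fun _ => 0, Finsupp.single p a⟩ : MultiState N)
      ⟨fun _ => p, fun _ => 0,
        Finsupp.single p (a - k) + Finsupp.single (p+d) (k*(1-2*d))⟩ := by
  have hne : p + d ≠ p := by intro h; nlinarith [h]
  induction k with
  | zero =>
      have : (Finsupp.single p (a - (0:ℕ)) + Finsupp.single (p+d) ((0:ℕ)*(1-2*d)) : ℝ →₀ ℝ)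
          = Finsupp.single p a := by
        simp
      rw [this]
      exact Relation.ReflTransGen.refl
  | succ k ih =>
      have hk' : (k : ℝ) ≤ a := by push_cast at hk ⊢; linarith
      refine (ih hk').trans ?_
      have happ : ∀ q, (Finsupp.single p (a - k) + Finsupp.single (p+d) (k*(1-2*d)) : ℝ →₀ ℝ) q
          = (if p = q then a - k else 0) + (if p + d = q then k*(1-2*d) else 0) := by
        intro q; rw [Finsupp.add_apply, Finsupp.single_apply, Finsupp.single_apply]
      have h1 := mj_trip i p d hd hd2
        (Finsupp.single p (a - k) + Finsupp.single (p+d) (k*(1-2*d))) ?_ ?_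
      · refine Relation.ReflTransGen.trans h1 ?_
        have : (Finsupp.single p (a - k) + Finsupp.single (p+d) (k*(1-2*d))
              - Finsupp.single p 1 + Finsupp.single (p+d) (1-2*d) : ℝ →₀ ℝ)
            = Finsupp.single p (a - (k+1:ℕ)) + Finsupp.single (p+d) ((k+1:ℕ)*(1-2*d)) := by
          ext q
          simp only [Finsupp.coe_add, Finsupp.coe_sub, Pi.add_apply, Pi.sub_apply,
            Finsupp.single_apply, Nat.cast_add, Nat.cast_one]
          split_ifs <;> ring
        rw [this]
      · intro q; rw [happ]
        push_cast at hk
        have : (0:ℝ) ≤ (k:ℝ) := Nat.cast_nonneg k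
        split_ifs <;> nlinarith
      · rw [happ, if_pos rfl, if_neg hne]
        push_cast at hk; linarith

/-- Jeep `i` standing at `p` with an empty tank fills up, drives to `q`
(at distance at most `1`) and deposits everything there. -/
lemma mj_cross {N : ℕ} (i : Fin N) (pos : Fin N → ℝ) (p q : ℝ)
    (hpi : pos i = p) (he : |q - p| ≤ 1)
    (D : ℝ →₀ ℝ) (hD : ∀ r, 0 ≤ D r) (hDp : 1 ≤ D p) :
    MJReach (⟨pos, fun _ => 0, D⟩ : MultiState N)
      ⟨Function.update pos i q, fun _ => 0,
        D - Finsupp.single p 1 + Finsupp.single q (1 - |q - p|)⟩ := by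
  set D1 : ℝ →₀ ℝ := D - Finsupp.single p 1 with hD1
  set D2 : ℝ →₀ ℝ := D1 + Finsupp.single q (1 - |q - p|) with hD2
  have hD1app : ∀ r, D1 r = D r - (if p = r then 1 else 0) := by
    intro r; rw [hD1, Finsupp.sub_apply, Finsupp.single_apply]
  have hD1nn : ∀ r, 0 ≤ D1 r := by
    intro r; rw [hD1app]; split_ifs with h
    · subst h; linarith
    · simpa using hD r
  have hD2app : ∀ r, D2 r = D1 r + (if q = r then 1 - |q - p| else 0) := by
    intro r; rw [hD2, Finsupp.add_apply, Finsupp.single_apply]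
  have habs : 0 ≤ |q - p| := abs_nonneg _
  have hD2nn : ∀ r, 0 ≤ D2 r := by
    intro r; rw [hD2app]; have := hD1nn r; split_ifs <;> linarith
  -- fill tank to 1
  refine Relation.ReflTransGen.head
    (mjstep_transfer _ i 1 D1 ?_ (by norm_num) le_rfl hD1nn ?_
      (tank' := Function.update (fun _ => 0) i 1) rfl) ?_
  · rw [hD1app]; simp [hpi]
  · intro r hr
    replace hr : r ≠ p := by simpa [hpi] using hr
    rw [hD1app, if_neg (fun h => hr h.symm)]; ring
  -- drive to q
  refine Relation.ReflTransGen.head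
    (mjstep_drive _ i q ?_ (pos' := Function.update pos i q)
      (tank' := Function.update (fun _ => 0) i (1 - |q - p|)) rfl ?_) ?_
  · simp [hpi]; linarith
  · funext r; by_cases h : r = i <;> simp [Function.update, h, hpi]
  -- deposit everything
  refine Relation.ReflTransGen.head
    (mjstep_transfer _ i 0 D2 ?_ le_rfl (by norm_num) hD2nn ?_
      (tank' := fun _ => 0) ?_) ?_
  · rw [hD2app]; simp; ring
  · intro r hr
    replace hr : r ≠ q := by simpa using hr
    rw [hD2app, if_neg (fun h => hr h.symm), add_zero]
  · funext r; by_cases h : r = i <;> simp [Function.update, h]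
  exact Relation.ReflTransGen.refl

/-- All `N` jeeps, starting at `p` with empty tanks and a depot of `c ≥ N`
tankloads at `p` (plus background fuel `E` stored away from `p`), cross to `q`
one at a time, each taking a full tankload and depositing the surplus. -/
lemma mj_crossAll {N : ℕ} (p q : ℝ) (hpq : p ≠ q) (he : |q - p| ≤ 1)
    (c : ℝ) (hc : (N:ℝ) ≤ c) (E : ℝ →₀ ℝ) (hE : ∀ r, 0 ≤ E r) (hEp : E p = 0) :
    MJReach (⟨fun _ => p, fun _ => 0, Finsupp.single p c + E⟩ : MultiState N)
      ⟨fun _ => q, fun _ => 0,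
        Finsupp.single p (c - N) + Finsupp.single q ((N:ℝ)*(1 - |q - p|)) + E⟩ := by
  have habs : 0 ≤ |q - p| := abs_nonneg _
  have key : ∀ i : ℕ, i ≤ N →
      MJReach (⟨fun _ => p, fun _ => 0, Finsupp.single p c + E⟩ : MultiState N)
        ⟨fun j => if (j:ℕ) < i then q else p, fun _ => 0,
          Finsupp.single p (c - i) + Finsupp.single q ((i:ℝ)*(1 - |q - p|)) + E⟩ := by
    intro i
    induction i with
    | zero =>
        intro _
        have h1 : (fun j : Fin N => if (j:ℕ) < 0 then q else p) = fun _ => p := by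
          funext j; simp
        have h2 : (Finsupp.single p (c - (0:ℕ)) +
            Finsupp.single q ((0:ℕ)*(1 - |q - p|)) + E : ℝ →₀ ℝ)
            = Finsupp.single p c + E := by simp
        rw [h1, h2]
        exact Relation.ReflTransGen.refl
    | succ i ih =>
        intro hi
        have hiN : i < N := hi
        have hi' : i ≤ N := Nat.le_of_lt hiN
        refine (ih hi').trans ?_
        set D : ℝ →₀ ℝ := Finsupp.single p (c - i) +
          Finsupp.single q ((i:ℝ)*(1 - |q - p|)) + E with hDdef
        have hDapp : ∀ r, D r = (if p = r then c - i else 0) +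
            (if q = r then (i:ℝ)*(1 - |q - p|) else 0) + E r := by
          intro r
          rw [hDdef, Finsupp.add_apply, Finsupp.add_apply,
            Finsupp.single_apply, Finsupp.single_apply]
        have hci : (1:ℝ) ≤ c - i := by
          have : ((i:ℝ) + 1) ≤ (N:ℝ) := by exact_mod_cast hiN
          linarith
        have hDnn : ∀ r, 0 ≤ D r := by
          intro r; rw [hDapp]
          have := hE r
          have : 0 ≤ (i:ℝ)*(1 - |q - p|) := by
            have : (0:ℝ) ≤ (i:ℝ) := Nat.cast_nonneg i
            nlinarith
          split_ifs <;> [skip; skip; skip; skip] <;> nlinarith [hE r]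
        have hDp : 1 ≤ D p := by
          rw [hDapp, if_pos rfl, if_neg (fun h => hpq h.symm), hEp]; linarith
        have hcr := mj_cross (⟨i, hiN⟩ : Fin N)
          (fun j => if (j:ℕ) < i then q else p) p q (by simp) he D hDnn hDp
        refine Relation.ReflTransGen.trans hcr ?_
        have hpos : Function.update (fun j : Fin N => if (j:ℕ) < i then q else p)
            ⟨i, hiN⟩ q = fun j : Fin N => if (j:ℕ) < i + 1 then q else p := by
          funext j
          by_cases h : j = (⟨i, hiN⟩ : Fin N)
          · simp [Function.update, h]
          · have hj : (j:ℕ) ≠ i := by simpa [Fin.ext_iff] using h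
            simp only [Function.update, dif_neg h]
            have hiff : ((j:ℕ) < i + 1) ↔ ((j:ℕ) < i) := by omega
            simp only [hiff]
        have hdep : D - Finsupp.single p 1 + Finsupp.single q (1 - |q - p|)
            = Finsupp.single p (c - ((i:ℕ)+1:ℕ)) +
              Finsupp.single q (((i:ℕ)+1:ℕ)*(1 - |q - p|)) + E := by
          rw [hDdef]; ext r
          simp only [Finsupp.coe_add, Finsupp.coe_sub, Pi.add_apply, Pi.sub_apply,
            Finsupp.single_apply, Nat.cast_add, Nat.cast_one]
          split_ifs <;> ring
        rw [hpos, hdep]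
  have h := key N le_rfl
  have hpos : (fun j : Fin N => if (j:ℕ) < N then q else p) = fun _ => q := by
    funext j; simp [j.isLt]
  rwa [hpos] at h

/-- Main induction: with `n` jeeps and `n + m` tankloads at `p`, all jeeps can
reach `p + 1 + ∑_{l=1}^m 1/(n+2l)`. -/
lemma mj_main (n : ℕ) (hn : 1 ≤ n) : ∀ (m : ℕ) (p : ℝ),
    ∃ D : ℝ →₀ ℝ,
      MJReach (⟨fun _ => p, fun _ => 0, Finsupp.single p ((n:ℝ)+(m:ℝ))⟩ : MultiState n)
        ⟨fun _ => p + (1 + ∑ l ∈ Finset.Icc 1 m, 1/((n:ℝ)+2*(l:ℝ))), fun _ => 0, D⟩ := by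
  intro m
  induction m with
  | zero =>
      intro p
      have h := mj_crossAll (N := n) p (p+1) (by intro h; linarith [h]) (by simp)
        ((n:ℝ)) le_rfl 0 (fun r => le_rfl) rfl
      have e1 : (Finsupp.single p (n:ℝ) + 0 : ℝ →₀ ℝ)
          = Finsupp.single p ((n:ℝ)+((0:ℕ):ℝ)) := by simp
      have e2 : (fun _ : Fin n => p + 1) =
          (fun _ : Fin n => p + (1 + ∑ l ∈ Finset.Icc 1 (0:ℕ), 1/((n:ℝ)+2*(l:ℝ)))) := by
        funext j; simp
      rw [e1, e2] at h
      exact ⟨_, h⟩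
  | succ m ih =>
      intro p
      set d : ℝ := 1/((n:ℝ)+2*((m:ℝ)+1)) with hddef
      have hn1 : (1:ℝ) ≤ (n:ℝ) := by exact_mod_cast hn
      have hm0 : (0:ℝ) ≤ (m:ℝ) := Nat.cast_nonneg m
      have hden : (0:ℝ) < (n:ℝ)+2*((m:ℝ)+1) := by linarith
      have hd : 0 < d := by rw [hddef]; positivity
      have hdn : ((n:ℝ)+2*((m:ℝ)+1)) * d = 1 := by
        rw [hddef]; field_simp
      have hd2 : 2*d ≤ 1 := by nlinarith
      have hne : p ≠ p + d := by intro h; nlinarith [h]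
      -- Phase 1: m+1 round trips by jeep 0
      have htrips := mj_trips (N := n) (⟨0, hn⟩ : Fin n) p d hd hd2
        ((n:ℝ)+((m:ℝ)+1)) (m+1) (by push_cast; linarith)
      -- Phase 2: all jeeps cross to p + d
      have hcross := mj_crossAll (N := n) p (p+d) hne
        (by rw [add_sub_cancel_left, abs_of_pos hd]; nlinarith)
        ((n:ℝ)+((m:ℝ)+1) - ((m+1:ℕ):ℝ))
        (by push_cast; linarith)
        (Finsupp.single (p+d) (((m+1:ℕ):ℝ)*(1-2*d)))
        (by intro r
            rw [Finsupp.single_apply]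
            split_ifs
            · have : (0:ℝ) ≤ ((m+1:ℕ):ℝ) := Nat.cast_nonneg _
              nlinarith
            · exact le_rfl)
        (by rw [Finsupp.single_apply, if_neg hne.symm])
      obtain ⟨D, hih⟩ := ih (p + d)
      have habs : |p + d - p| = d := by
        rw [add_sub_cancel_left]; exact abs_of_pos hd
      have hdep : Finsupp.single p ((n:ℝ)+((m:ℝ)+1) - ((m+1:ℕ):ℝ) - (n:ℝ)) +
          Finsupp.single (p+d) ((n:ℝ)*(1 - |p + d - p|)) +
          Finsupp.single (p+d) (((m+1:ℕ):ℝ)*(1-2*d))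
          = Finsupp.single (p+d) ((n:ℝ)+(m:ℝ)) := by
        rw [habs]
        ext r
        simp only [Finsupp.coe_add, Pi.add_apply, Finsupp.single_apply, Nat.cast_add,
          Nat.cast_one]
        split_ifs with h1 h2
        · exact absurd (h1.trans h2.symm) hne
        · ring
        · linear_combination -hdn
        · ring
      rw [hdep] at hcross
      have hfin : (fun _ : Fin n => (p + d) + (1 + ∑ l ∈ Finset.Icc 1 m, 1/((n:ℝ)+2*(l:ℝ))))
          = fun _ : Fin n => p + (1 + ∑ l ∈ Finset.Icc 1 (m+1), 1/((n:ℝ)+2*(l:ℝ))) := by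
        funext j
        rw [Finset.sum_Icc_succ_top (Nat.succ_le_succ (Nat.zero_le m))]
        rw [hddef]
        push_cast
        ring
      rw [hfin] at hih
      have estart : (Finsupp.single p ((n:ℝ)+((m+1:ℕ):ℝ)) : ℝ →₀ ℝ)
          = Finsupp.single p ((n:ℝ)+((m:ℝ)+1)) := by norm_cast
      rw [estart]
      exact ⟨D, (htrips.trans hcross).trans hih⟩

/-- Convert a reachability proof into a finite sequence of states. -/
lemma mj_seq {N : ℕ} {a b : MultiState N} (h : MJReach a b) :
    ∃ (k : ℕ) (f : ℕ → MultiState N),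
      f 0 = a ∧ (∀ j < k, MultiStep (f j) (f (j + 1))) ∧ f k = b := by
  induction h with
  | refl => exact ⟨0, fun _ => a, rfl, fun j hj => absurd hj (Nat.not_lt_zero j), rfl⟩
  | @tail b' c' hr hstep ih =>
      obtain ⟨k, f, h0, hsteps, hk⟩ := ih
      refine ⟨k+1, fun j => if j = k+1 then c' else f j, ?_, ?_, ?_⟩
      · simp [h0]
      · intro j hj
        show MultiStep (if j = k+1 then c' else f j) (if j+1 = k+1 then c' else f (j+1))
        rcases Nat.lt_succ_iff_lt_or_eq.mp hj with h | h
        · rw [if_neg (by omega), if_neg (by omega)]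
          exact hsteps j h
        · subst h
          rw [if_neg (by omega), if_pos rfl, hk]
          exact hstep
      · simp


/-- With exactly `n ≥ 1` jeeps (none required to return) and `x ≥ n`
tankloads, there is a plan after which every jeep has reached position
`1 + Σ_{k=1}^{x−n} 1/(n+2k)`: all `n` jeeps can cross a desert of this width
one way. -/
theorem multi_all_oneway_reachable (n x : ℕ) (hn : 1 ≤ n) (hx : n ≤ x) :
    ∃ (k : ℕ) (f : ℕ → MultiState n),
      f 0 = multiInit n (x : ℝ) ∧
      (∀ j < k, MultiStep (f j) (f (j + 1))) ∧
      (∀ i : Fin n, ∃ j ≤ k,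
        (f j).pos i =
          1 + ∑ l ∈ Finset.Icc 1 (x - n), 1 / ((n : ℝ) + 2 * (l : ℝ))) := by
  obtain ⟨D, h⟩ := mj_main n hn (x - n) 0
  have hcast : (Finsupp.single (0:ℝ) ((n:ℝ) + ((x-n:ℕ):ℝ)) : ℝ →₀ ℝ)
      = Finsupp.single (0:ℝ) (x:ℝ) := by
    rw [Nat.cast_sub hx]; ring_nf
  rw [hcast] at h
  obtain ⟨k, f, h0, hsteps, hk⟩ := mj_seq h
  refine ⟨k, f, ?_, hsteps, ?_⟩
  · rw [h0]; rfl
  · intro i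
    refine ⟨k, le_rfl, ?_⟩
    rw [hk]
    show (0:ℝ) + (1 + ∑ l ∈ Finset.Icc 1 (x - n), 1 / ((n : ℝ) + 2 * (l : ℝ)))
        = 1 + ∑ l ∈ Finset.Icc 1 (x - n), 1 / ((n : ℝ) + 2 * (l : ℝ))
    rw [zero_add]
end

section
/- Let n ≥ 1 and x ≥ n be integers. In the multi-jeep model with exactly n jeeps (no helpers), for every plan with x tankloads in which every jeep reaches a state with position ≥ d, one has d ≤ 1 + Σ_{k=1}^{x−n} 1/(n+2k). -/
open MeasureTheory
open scoped ENNReal NNReal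

namespace JeepProof

noncomputable def clamp (m M t : ℝ) : ℝ := min M (max m t)

noncomputable def cr (a b y : ℝ) : ℝ := max a b - clamp (min a b) (max a b) y

lemma clamp_le (m M t : ℝ) : clamp m M t ≤ M := min_le_left _ _

lemma le_clamp (m M t : ℝ) (h : m ≤ M) : m ≤ clamp m M t :=
  le_min h (le_max_left _ _)

lemma clamp_mono (m M : ℝ) {t t' : ℝ} (h : t ≤ t') : clamp m M t ≤ clamp m M t' :=
  min_le_min le_rfl (max_le_max le_rfl h)

lemma cr_nonneg (a b y : ℝ) : 0 ≤ cr a b y := by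
  have := clamp_le (min a b) (max a b) y; unfold cr; linarith

lemma cr_le_abs (a b y : ℝ) : cr a b y ≤ |b - a| := by
  have := le_clamp (min a b) (max a b) y (min_le_max)
  have h2 : max a b - min a b = |b - a| := max_sub_min_eq_abs a b
  simp only [cr]; linarith

lemma cr_self (a y : ℝ) : cr a a y = 0 := by
  have h := cr_le_abs a a y
  have h2 := cr_nonneg a a y
  simp only [sub_self, abs_zero] at h; linarith

lemma cr_diff (a b y1 y2 : ℝ) :
    cr a b y1 - cr a b y2 = clamp (min a b) (max a b) y2 - clamp (min a b) (max a b) y1 := by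
  unfold cr; ring

lemma clamp_diff_eq (m M y1 y2 : ℝ) (hmM : m ≤ M) (h12 : y1 ≤ y2) :
    clamp m M y2 - clamp m M y1 = max 0 (min M y2 - max m y1) := by
  simp only [clamp, min_def, max_def]
  split_ifs <;> linarith

lemma vol_clamp (m M y1 y2 : ℝ) (hmM : m ≤ M) (h12 : y1 ≤ y2) :
    volume (Set.Icc m M ∩ Set.Icc y1 y2) = ENNReal.ofReal (clamp m M y2 - clamp m M y1) := by
  rw [Set.Icc_inter_Icc, Real.volume_Icc, clamp_diff_eq m M y1 y2 hmM h12]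
  rcases le_total (M ⊓ y2 - m ⊔ y1) 0 with h | h
  · rw [max_eq_left h, ENNReal.ofReal_of_nonpos h, ENNReal.ofReal_zero]
  · rw [max_eq_right h]

lemma meas_cover {ι : Type*} (S : Finset ι) (m M : ι → ℝ) (hmM : ∀ s ∈ S, m s ≤ M s)
    (y1 y2 : ℝ) (h12 : y1 ≤ y2) (r : ℕ)
    (hz : ∀ z ∈ Set.Ioo y1 y2,
      r ≤ ∑ s ∈ S, (if z ∈ Set.Icc (m s) (M s) then 1 else 0)) :
    (r : ℝ) * (y2 - y1) ≤ ∑ s ∈ S, (clamp (m s) (M s) y2 - clamp (m s) (M s) y1) := by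
  have hnn : ∀ s ∈ S, 0 ≤ clamp (m s) (M s) y2 - clamp (m s) (M s) y1 := by
    intro s _; have := clamp_mono (m s) (M s) h12; linarith
  have key : (r : ℝ≥0∞) * ENNReal.ofReal (y2 - y1)
      ≤ ∑ s ∈ S, ENNReal.ofReal (clamp (m s) (M s) y2 - clamp (m s) (M s) y1) := by
    have hmeas : ∀ s ∈ S, Measurable ((Set.Icc (m s) (M s)).indicator (1 : ℝ → ℝ≥0∞)) :=
      fun s _ => (measurable_one).indicator measurableSet_Icc
    calc (r : ℝ≥0∞) * ENNReal.ofReal (y2 - y1)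
        = ∫⁻ z in Set.Ioo y1 y2, (r : ℝ≥0∞) := by
          rw [setLIntegral_const, Real.volume_Ioo]
      _ ≤ ∫⁻ z in Set.Ioo y1 y2, ∑ s ∈ S, (Set.Icc (m s) (M s)).indicator 1 z := by
          apply setLIntegral_mono (Finset.measurable_sum S hmeas)
          intro z hzIoo
          have h1 := hz z hzIoo
          calc (r : ℝ≥0∞) = ((r : ℕ) : ℝ≥0∞) := rfl
            _ ≤ ((∑ s ∈ S, if z ∈ Set.Icc (m s) (M s) then 1 else 0 : ℕ) : ℝ≥0∞) := by
                exact_mod_cast h1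
            _ = ∑ s ∈ S, (Set.Icc (m s) (M s)).indicator 1 z := by
                push_cast
                refine Finset.sum_congr rfl fun s _ => ?_
                rw [Set.indicator_apply]
                split_ifs <;> simp
      _ = ∑ s ∈ S, ∫⁻ z in Set.Ioo y1 y2, (Set.Icc (m s) (M s)).indicator 1 z :=
          lintegral_finset_sum S (fun s hs => hmeas s hs)
      _ = ∑ s ∈ S, volume (Set.Icc (m s) (M s) ∩ Set.Ioo y1 y2) := by
          refine Finset.sum_congr rfl fun s _ => ?_
          rw [lintegral_indicator_one measurableSet_Icc,
            Measure.restrict_apply measurableSet_Icc]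
      _ ≤ ∑ s ∈ S, volume (Set.Icc (m s) (M s) ∩ Set.Icc y1 y2) := by
          refine Finset.sum_le_sum fun s _ => measure_mono ?_
          exact Set.inter_subset_inter_right _ Set.Ioo_subset_Icc_self
      _ = ∑ s ∈ S, ENNReal.ofReal (clamp (m s) (M s) y2 - clamp (m s) (M s) y1) := by
          refine Finset.sum_congr rfl fun s hs => vol_clamp _ _ _ _ (hmM s hs) h12
  rw [← ENNReal.ofReal_sum_of_nonneg hnn] at key
  have : ENNReal.ofReal ((r : ℝ) * (y2 - y1)) ≤ ENNReal.ofReal (∑ s ∈ S, (clamp (m s) (M s) y2 - clamp (m s) (M s) y1)) := by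
    rw [ENNReal.ofReal_mul (by positivity)]
    simpa using key
  exact (ENNReal.ofReal_le_ofReal_iff (Finset.sum_nonneg hnn)).mp this


/-! ### Crossing counts along a trajectory -/

noncomputable def upC (g : ℕ → ℝ) (z : ℝ) (k : ℕ) : ℕ :=
  ∑ j ∈ Finset.range k, (if g j ≤ z ∧ z < g (j + 1) then 1 else 0)

noncomputable def dnC (g : ℕ → ℝ) (z : ℝ) (k : ℕ) : ℕ :=
  ∑ j ∈ Finset.range k, (if g (j + 1) ≤ z ∧ z < g j then 1 else 0)

lemma upC_le_dnC (g : ℕ → ℝ) (z : ℝ) (hg0 : g 0 ≤ z) :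
    ∀ k, upC g z k ≤ dnC g z k + (if z < g k then 1 else 0) := by
  intro k
  induction k with
  | zero => simp [upC, dnC, hg0, not_lt.mpr hg0]
  | succ k ih =>
    unfold upC dnC at *
    rw [Finset.sum_range_succ, Finset.sum_range_succ]
    rcases le_or_gt (g k) z with h1 | h1 <;> rcases le_or_gt (g (k+1)) z with h2 | h2
    · rw [if_neg (fun h => absurd h.2 (not_lt.mpr h2)), if_neg (fun h => absurd h.2 (not_lt.mpr h1)),
        if_neg (not_lt.mpr h2)]
      rw [if_neg (not_lt.mpr h1)] at ih
      omega
    · rw [if_pos ⟨h1, h2⟩, if_neg (fun h => absurd h1 (not_le.mpr h.2)), if_pos h2]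
      rw [if_neg (not_lt.mpr h1)] at ih
      omega
    · rw [if_neg (fun h => absurd h.1 (not_le.mpr h1)), if_pos ⟨h2, h1⟩, if_neg (not_lt.mpr h2)]
      rw [if_pos h1] at ih
      omega
    · rw [if_neg (fun h => absurd h.1 (not_le.mpr h1)), if_neg (fun h => absurd h.1 (not_le.mpr h2)),
        if_pos h2]
      rw [if_pos h1] at ih
      omega

lemma upC_pos (g : ℕ → ℝ) (z : ℝ) (k : ℕ) (hg0 : g 0 ≤ z) (j : ℕ) (hj : j ≤ k)
    (h : z < g j) : 1 ≤ upC g z k := by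
  by_contra hc
  have h0 : upC g z k = 0 := by omega
  have hall : ∀ j', j' ≤ k → g j' ≤ z := by
    intro j'
    induction j' with
    | zero => intro _; exact hg0
    | succ j' ih =>
      intro hle
      have hj' : g j' ≤ z := ih (by omega)
      have := (Finset.sum_eq_zero_iff.mp h0) j' (Finset.mem_range.mpr (by omega))
      by_contra hgt
      rw [if_pos ⟨hj', not_le.mp hgt⟩] at this
      exact one_ne_zero this
  exact absurd (hall j hj) (not_le.mpr h)

/-! ### Finsupp sum helpers -/

lemma fsum_congr_off {D D' : ℝ →₀ ℝ} {p : ℝ} (heq : ∀ q, q ≠ p → D' q = D q)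
    (F : ℝ → ℝ → ℝ) (hF0 : ∀ q, F q 0 = 0) :
    D'.sum F + F p (D p) = D.sum F + F p (D' p) := by
  classical
  set u := D.support ∪ D'.support with hu
  have hD : D.sum F = ∑ q ∈ u, F q (D q) :=
    Finsupp.sum_of_support_subset D Finset.subset_union_left F (fun q _ => hF0 q)
  have hD' : D'.sum F = ∑ q ∈ u, F q (D' q) :=
    Finsupp.sum_of_support_subset D' Finset.subset_union_right F (fun q _ => hF0 q)
  have hkey : ∑ q ∈ u, (F q (D' q) - F q (D q)) = F p (D' p) - F p (D p) := by
    apply Finset.sum_eq_single p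
    · intro q _ hq; rw [heq q hq]; ring
    · intro hp
      have hDp : D p = 0 := by
        by_contra h; exact hp (Finset.mem_union_left _ (Finsupp.mem_support_iff.mpr h))
      have hD'p : D' p = 0 := by
        by_contra h; exact hp (Finset.mem_union_right _ (Finsupp.mem_support_iff.mpr h))
      rw [hDp, hD'p]; ring
  rw [Finset.sum_sub_distrib] at hkey
  rw [hD, hD']; linarith


/-! ### State quantities -/

noncomputable def fsum (D : ℝ →₀ ℝ) : ℝ := D.sum fun _ v => v

noncomputable def wsum (z : ℝ) (D : ℝ →₀ ℝ) : ℝ := D.sum fun q v => if z < q then v else 0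

lemma fsum_nonneg {D : ℝ →₀ ℝ} (h : ∀ q, 0 ≤ D q) : 0 ≤ fsum D :=
  Finset.sum_nonneg fun q _ => h q

lemma wsum_nonneg {z : ℝ} {D : ℝ →₀ ℝ} (h : ∀ q, 0 ≤ D q) : 0 ≤ wsum z D :=
  Finset.sum_nonneg fun q _ => by dsimp; split_ifs; exacts [h q, le_rfl]

lemma fsum_off {D D' : ℝ →₀ ℝ} {p : ℝ} (heq : ∀ q, q ≠ p → D' q = D q) :
    fsum D' + D p = fsum D + D' p :=
  fsum_congr_off heq _ (fun _ => rfl)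

lemma wsum_off (z : ℝ) {D D' : ℝ →₀ ℝ} {p : ℝ} (heq : ∀ q, q ≠ p → D' q = D q) :
    wsum z D' + (if z < p then D p else 0) = wsum z D + (if z < p then D' p else 0) :=
  fsum_congr_off heq _ (fun q => by split_ifs <;> rfl)

def Inv {N : ℕ} (s : MultiState N) : Prop :=
  (∀ i, 0 ≤ s.tank i ∧ s.tank i ≤ 1) ∧ (∀ q, 0 ≤ s.depot q)

noncomputable def Tfuel {N : ℕ} (s : MultiState N) : ℝ := (∑ i, s.tank i) + fsum s.depot

noncomputable def Afuel {N : ℕ} (z : ℝ) (s : MultiState N) : ℝ :=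
  (∑ i, if z < s.pos i then s.tank i else 0) + wsum z s.depot

noncomputable def lenMove {N : ℕ} (s s' : MultiState N) : ℝ := ∑ i, |s'.pos i - s.pos i|

noncomputable def crMove {N : ℕ} (y : ℝ) (s s' : MultiState N) : ℝ :=
  ∑ i, cr (s.pos i) (s'.pos i) y

noncomputable def upMove {N : ℕ} (z : ℝ) (s s' : MultiState N) : ℕ :=
  ∑ i, if s.pos i ≤ z ∧ z < s'.pos i then 1 else 0

noncomputable def dnMove {N : ℕ} (z : ℝ) (s s' : MultiState N) : ℕ :=
  ∑ i, if s'.pos i ≤ z ∧ z < s.pos i then 1 else 0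

lemma sum_update_univ {N : ℕ} (g : Fin N → ℝ) (i : Fin N) (a : ℝ) :
    ∑ i', Function.update g i a i' = (∑ i', g i') + a - g i := by
  rw [Finset.sum_update_of_mem (Finset.mem_univ i)]
  rw [Finset.sum_sdiff_eq_sub (Finset.singleton_subset_iff.mpr (Finset.mem_univ i)),
    Finset.sum_singleton]
  ring

lemma update_if {N : ℕ} (pos tank : Fin N → ℝ) (i : Fin N) (a z : ℝ) :
    (fun i' => if z < pos i' then Function.update tank i a i' else 0)
      = Function.update (fun i' => if z < pos i' then tank i' else 0) i
          (if z < pos i then a else 0) := by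
  funext i'
  rcases eq_or_ne i' i with rfl | h
  · simp
  · simp [Function.update_of_ne h]

lemma update_if2 {N : ℕ} (pos tank : Fin N → ℝ) (i : Fin N) (p' a z : ℝ) :
    (fun i' => if z < Function.update pos i p' i' then Function.update tank i a i' else 0)
      = Function.update (fun i' => if z < pos i' then tank i' else 0) i
          (if z < p' then a else 0) := by
  funext i'
  rcases eq_or_ne i' i with rfl | h
  · simp
  · simp [Function.update_of_ne h]

lemma inv_step {N : ℕ} {s s' : MultiState N} (h : MultiStep s s') (hs : Inv s) : Inv s' := by
  obtain ⟨ht, hd⟩ := hs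
  cases h with
  | drive i p' hdr =>
    refine ⟨fun i' => ?_, hd⟩
    rcases eq_or_ne i' i with rfl | hne
    · simp only [Function.update_self]
      refine ⟨hdr, ?_⟩
      have := (ht i').2; have := abs_nonneg (p' - s.pos i'); linarith
    · simpa [Function.update_of_ne hne] using ht i'
  | transferDepot i t' D' hcons ht0 ht1 hD heq =>
    refine ⟨fun i' => ?_, hD⟩
    rcases eq_or_ne i' i with rfl | hne
    · simp [ht0, ht1]
    · simpa [Function.update_of_ne hne] using ht i'
  | transferJeep i j hij hpos ti' tj' hcons hi0 hi1 hj0 hj1 =>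
    refine ⟨fun i' => ?_, hd⟩
    rcases eq_or_ne i' j with rfl | hnej
    · simp [hj0, hj1]
    · rcases eq_or_ne i' i with rfl | hnei
      · simp [Function.update_of_ne hnej, hi0, hi1]
      · simpa [Function.update_of_ne hnej, Function.update_of_ne hnei] using ht i'


lemma crMove_zero {N : ℕ} (y : ℝ) (s : MultiState N) (t : Fin N → ℝ) (d : ℝ →₀ ℝ) :
    crMove y s ⟨s.pos, t, d⟩ = 0 := by
  unfold crMove
  exact Finset.sum_eq_zero fun i _ => cr_self _ _

lemma upMove_zero {N : ℕ} (z : ℝ) (s : MultiState N) (t : Fin N → ℝ) (d : ℝ →₀ ℝ) :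
    upMove z s ⟨s.pos, t, d⟩ = 0 := by
  unfold upMove
  exact Finset.sum_eq_zero fun i _ =>
    if_neg (fun hc => absurd (lt_of_le_of_lt hc.1 hc.2) (lt_irrefl _))

lemma T_step {N : ℕ} {s s' : MultiState N} (h : MultiStep s s') :
    Tfuel s' + lenMove s s' = Tfuel s := by
  cases h with
  | drive i p' hdr =>
    unfold Tfuel lenMove
    dsimp only
    rw [sum_update_univ]
    have hlen : (∑ i', |Function.update s.pos i p' i' - s.pos i'|) = |p' - s.pos i| := by
      rw [Finset.sum_eq_single_of_mem i (Finset.mem_univ i)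
        (fun b _ hb => by rw [Function.update_of_ne hb]; simp)]
      rw [Function.update_self]
    rw [hlen]
    ring
  | transferDepot i t' D' hcons ht0 ht1 hD heq =>
    unfold Tfuel lenMove
    dsimp only
    rw [sum_update_univ]
    have hlen : (∑ i' : Fin N, |s.pos i' - s.pos i'|) = 0 := by simp
    have hfs := fsum_off heq
    rw [hlen]
    linarith
  | transferJeep i j hij hpos ti' tj' hcons hi0 hi1 hj0 hj1 =>
    unfold Tfuel lenMove
    dsimp only
    rw [sum_update_univ, sum_update_univ]
    have hlen : (∑ i' : Fin N, |s.pos i' - s.pos i'|) = 0 := by simp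
    rw [hlen, Function.update_of_ne (Ne.symm hij)]
    ring_nf
    linarith

lemma cr_core {p p' t z : ℝ} (h0 : 0 ≤ t - |p' - p|) (h1 : t ≤ 1) :
    (if z < p' then t - |p' - p| else 0) + cr p p' z
      ≤ (if z < p then t else 0) + (if p ≤ z ∧ z < p' then 1 else 0) := by
  unfold cr clamp
  rcases le_total p p' with hpp | hpp
  · rw [abs_of_nonneg (sub_nonneg.mpr hpp)] at h0 ⊢
    rw [min_eq_left hpp, max_eq_right hpp]
    rcases lt_or_ge z p with hz | hz <;> rcases lt_or_ge z p' with hz' | hz'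
    · rw [if_pos hz', if_pos hz, if_neg (fun hc => absurd hc.1 (not_le.mpr hz)),
        max_eq_left hz.le, min_eq_right hpp]
      linarith
    · exact absurd (lt_of_le_of_lt hz' hz) (not_lt.mpr hpp)
    · rw [if_pos hz', if_neg (not_lt.mpr hz), if_pos ⟨hz, hz'⟩,
        max_eq_right hz, min_eq_right hz'.le]
      linarith
    · rw [if_neg (not_lt.mpr hz'), if_neg (not_lt.mpr hz),
        if_neg (fun hc => absurd hc.2 (not_lt.mpr hz')),
        max_eq_right hz, min_eq_left hz']
      simp
  · rw [abs_of_nonpos (sub_nonpos.mpr hpp)] at h0 ⊢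
    rw [min_eq_right hpp, max_eq_left hpp]
    have hnc : ¬(p ≤ z ∧ z < p') := fun hc => absurd (lt_of_le_of_lt hc.1 hc.2) (not_lt.mpr hpp)
    rw [if_neg hnc]
    rcases lt_or_ge z p' with hz' | hz'
    · rw [if_pos hz', if_pos (lt_of_lt_of_le hz' hpp), max_eq_left hz'.le, min_eq_right hpp]
      linarith
    · rw [if_neg (not_lt.mpr hz')]
      rcases lt_or_ge z p with hz | hz
      · rw [if_pos hz, max_eq_right hz', min_eq_right hz.le]
        linarith
      · rw [if_neg (not_lt.mpr hz), max_eq_right hz', min_eq_left hz]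
        simp

lemma A_step {N : ℕ} (z : ℝ) {s s' : MultiState N} (h : MultiStep s s') (hs : Inv s) :
    Afuel z s' + crMove z s s' ≤ Afuel z s + (upMove z s s' : ℝ) := by
  cases h with
  | drive i p' hdr =>
    unfold Afuel crMove upMove
    dsimp only
    rw [update_if2, sum_update_univ]
    have hcr : (∑ i', cr (s.pos i') (Function.update s.pos i p' i') z)
        = cr (s.pos i) p' z := by
      rw [Finset.sum_eq_single_of_mem i (Finset.mem_univ i)
        (fun b _ hb => by rw [Function.update_of_ne hb]; exact cr_self _ _)]
      rw [Function.update_self]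
    have hup : (∑ i', if s.pos i' ≤ z ∧ z < Function.update s.pos i p' i' then (1:ℕ) else 0)
        = (if s.pos i ≤ z ∧ z < p' then (1:ℕ) else 0) := by
      rw [Finset.sum_eq_single_of_mem i (Finset.mem_univ i)
        (fun b _ hb => by
          rw [Function.update_of_ne hb]
          exact if_neg (fun hc => absurd (lt_of_le_of_lt hc.1 hc.2) (lt_irrefl _)))]
      rw [Function.update_self]
    rw [hcr, hup]
    have hcore := cr_core (p := s.pos i) (p' := p') (t := s.tank i) (z := z) hdr (hs.1 i).2
    have hcast : ((if s.pos i ≤ z ∧ z < p' then (1:ℕ) else 0 : ℕ) : ℝ)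
        = (if s.pos i ≤ z ∧ z < p' then (1:ℝ) else 0) := by
      split_ifs <;> simp
    rw [hcast]
    linarith
  | transferDepot i t' D' hcons ht0 ht1 hD heq =>
    rw [crMove_zero, upMove_zero]
    unfold Afuel
    dsimp only
    rw [update_if, sum_update_univ]
    have hws := wsum_off z heq
    rcases lt_or_ge z (s.pos i) with hz | hz
    · simp only [if_pos hz] at hws ⊢
      push_cast
      linarith
    · simp only [if_neg (not_lt.mpr hz)] at hws ⊢
      push_cast
      linarith
  | transferJeep i j hij hpos ti' tj' hcons hi0 hi1 hj0 hj1 =>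
    rw [crMove_zero, upMove_zero]
    unfold Afuel
    dsimp only
    rw [update_if, update_if, sum_update_univ, sum_update_univ,
      Function.update_of_ne (Ne.symm hij)]
    rw [← hpos]
    rcases lt_or_ge z (s.pos i) with hz | hz
    · simp only [if_pos hz]
      push_cast
      linarith
    · simp only [if_neg (not_lt.mpr hz)]
      push_cast
      linarith


/-! ### Plan-level accumulation -/

noncomputable def Cpart {N : ℕ} (f : ℕ → MultiState N) (y : ℝ) (j : ℕ) : ℝ :=
  ∑ j' ∈ Finset.range j, crMove y (f j') (f (j' + 1))

noncomputable def Upart {N : ℕ} (f : ℕ → MultiState N) (z : ℝ) (j : ℕ) : ℕ :=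
  ∑ j' ∈ Finset.range j, upMove z (f j') (f (j' + 1))

noncomputable def Dpart {N : ℕ} (f : ℕ → MultiState N) (z : ℝ) (j : ℕ) : ℕ :=
  ∑ j' ∈ Finset.range j, dnMove z (f j') (f (j' + 1))

lemma inv_all {N : ℕ} (f : ℕ → MultiState N) (k : ℕ) (h0 : Inv (f 0))
    (hstep : ∀ j < k, MultiStep (f j) (f (j + 1))) : ∀ j ≤ k, Inv (f j) := by
  intro j
  induction j with
  | zero => intro _; exact h0
  | succ j ih => intro hj; exact inv_step (hstep j (by omega)) (ih (by omega))

lemma acc_main {N : ℕ} (f : ℕ → MultiState N) (k : ℕ) (z : ℝ)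
    (hstep : ∀ j < k, MultiStep (f j) (f (j + 1))) (hinv : ∀ j ≤ k, Inv (f j))
    (hA0 : Afuel z (f 0) = 0) :
    ∀ j ≤ k, Afuel z (f j) + Cpart f z j ≤ (Upart f z j : ℝ) := by
  intro j
  induction j with
  | zero => intro _; simp [Cpart, Upart, hA0]
  | succ j ih =>
    intro hj
    have h1 := A_step z (hstep j (by omega)) (hinv j (by omega))
    have h2 := ih (by omega)
    unfold Cpart Upart at *
    rw [Finset.sum_range_succ, Finset.sum_range_succ]
    push_cast at *
    linarith

lemma acc_T {N : ℕ} (f : ℕ → MultiState N) (k : ℕ)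
    (hstep : ∀ j < k, MultiStep (f j) (f (j + 1))) :
    ∀ j ≤ k, Tfuel (f j) + ∑ j' ∈ Finset.range j, lenMove (f j') (f (j' + 1))
      = Tfuel (f 0) := by
  intro j
  induction j with
  | zero => simp
  | succ j ih =>
    intro hj
    have h1 := T_step (hstep j (by omega))
    have h2 := ih (by omega)
    rw [Finset.sum_range_succ]
    linarith

lemma updn_le_icc (a b z : ℝ) :
    (if a ≤ z ∧ z < b then (1:ℕ) else 0) + (if b ≤ z ∧ z < a then 1 else 0)
      ≤ (if z ∈ Set.Icc (min a b) (max a b) then 1 else 0) := by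
  by_cases h1 : a ≤ z ∧ z < b
  · have hm : z ∈ Set.Icc (min a b) (max a b) :=
      ⟨le_trans (min_le_left a b) h1.1, le_trans h1.2.le (le_max_right a b)⟩
    have h2 : ¬(b ≤ z ∧ z < a) := fun h2 => absurd (lt_of_le_of_lt h2.1 h1.2) (lt_irrefl _)
    rw [if_pos h1, if_neg h2, if_pos hm]
  · by_cases h2 : b ≤ z ∧ z < a
    · have hm : z ∈ Set.Icc (min a b) (max a b) :=
        ⟨le_trans (min_le_right a b) h2.1, le_trans h2.2.le (le_max_left a b)⟩
      rw [if_neg h1, if_pos h2, if_pos hm]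
    · rw [if_neg h1, if_neg h2]
      split_ifs <;> omega

lemma slope {N : ℕ} (f : ℕ → MultiState N) (k : ℕ) (y1 y2 : ℝ) (r : ℕ) (h12 : y1 ≤ y2)
    (hz : ∀ z ∈ Set.Ioo y1 y2, r ≤ Upart f z k + Dpart f z k) :
    (r : ℝ) * (y2 - y1) ≤ Cpart f y1 k - Cpart f y2 k := by
  have key := meas_cover (S := Finset.range k ×ˢ (Finset.univ : Finset (Fin N)))
    (m := fun s => min ((f s.1).pos s.2) ((f (s.1 + 1)).pos s.2))
    (M := fun s => max ((f s.1).pos s.2) ((f (s.1 + 1)).pos s.2))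
    (fun s _ => min_le_max) y1 y2 h12 r ?_
  · have hconv : Cpart f y1 k - Cpart f y2 k
        = ∑ s ∈ Finset.range k ×ˢ (Finset.univ : Finset (Fin N)),
            (clamp (min ((f s.1).pos s.2) ((f (s.1 + 1)).pos s.2))
                   (max ((f s.1).pos s.2) ((f (s.1 + 1)).pos s.2)) y2
             - clamp (min ((f s.1).pos s.2) ((f (s.1 + 1)).pos s.2))
                   (max ((f s.1).pos s.2) ((f (s.1 + 1)).pos s.2)) y1) := by
      rw [Finset.sum_product]
      unfold Cpart crMove
      rw [← Finset.sum_sub_distrib]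
      refine Finset.sum_congr rfl fun j _ => ?_
      rw [← Finset.sum_sub_distrib]
      exact Finset.sum_congr rfl fun i _ => cr_diff _ _ _ _
    rw [hconv]
    exact key
  · intro z hzIoo
    refine le_trans (hz z hzIoo) ?_
    rw [Finset.sum_product]
    unfold Upart Dpart upMove dnMove
    rw [← Finset.sum_add_distrib]
    refine Finset.sum_le_sum fun j _ => ?_
    rw [← Finset.sum_add_distrib]
    exact Finset.sum_le_sum fun i _ => updn_le_icc _ _ _

lemma Upart_eq {N : ℕ} (f : ℕ → MultiState N) (z : ℝ) (k : ℕ) :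
    Upart f z k = ∑ i, upC (fun j => (f j).pos i) z k := by
  unfold Upart upMove upC
  rw [Finset.sum_comm]

lemma Dpart_eq {N : ℕ} (f : ℕ → MultiState N) (z : ℝ) (k : ℕ) :
    Dpart f z k = ∑ i, dnC (fun j => (f j).pos i) z k := by
  unfold Dpart dnMove dnC
  rw [Finset.sum_comm]

end JeepProof

open JeepProof in
/-- With exactly `n ≥ 1` jeeps and `x ≥ n` tankloads, for every plan in which
every jeep reaches a state with position `≥ d`, one has
`d ≤ 1 + Σ_{k=1}^{x−n} 1/(n+2k)`. -/
theorem multi_all_oneway_bound (n x : ℕ) (hn : 1 ≤ n) (hx : n ≤ x)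
    (d : ℝ) (k : ℕ) (f : ℕ → MultiState n)
    (h0 : f 0 = multiInit n (x : ℝ))
    (hstep : ∀ j < k, MultiStep (f j) (f (j + 1)))
    (hreach : ∀ i : Fin n, ∃ j ≤ k, d ≤ (f j).pos i) :
    d ≤ 1 + ∑ l ∈ Finset.Icc 1 (x - n), 1 / ((n : ℝ) + 2 * (l : ℝ)) := by
  classical
  have hxnn : (0:ℝ) ≤ (x : ℕ) := Nat.cast_nonneg x
  have hinv0 : Inv (f 0) := by
    rw [h0]
    refine ⟨fun i => ⟨le_rfl, zero_le_one⟩, fun q => ?_⟩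
    simp only [multiInit, Finsupp.single_apply]
    split_ifs <;> simp [hxnn]
  have hinv : ∀ j ≤ k, Inv (f j) := inv_all f k hinv0 hstep
  have hA0 : ∀ z : ℝ, 0 < z → Afuel z (f 0) = 0 := by
    intro z hz
    rw [h0]
    unfold Afuel wsum multiInit
    simp only
    have hs : ((Finsupp.single (0:ℝ) (x:ℝ)).sum fun q v => if z < q then v else 0)
        = (if z < (0:ℝ) then (x:ℝ) else 0) := Finsupp.sum_single_index (by simp)
    rw [hs]
    simp [lt_asymm hz]
  have hT0 : Tfuel (f 0) = (x : ℝ) := by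
    rw [h0]
    unfold Tfuel fsum multiInit
    simp only
    rw [Finsupp.sum_single_index rfl]
    simp
  have hAnn : ∀ (z : ℝ) (j : ℕ), j ≤ k → 0 ≤ Afuel z (f j) := by
    intro z j hj
    obtain ⟨ht, hd⟩ := hinv j hj
    refine add_nonneg (Finset.sum_nonneg fun i _ => ?_) (wsum_nonneg hd)
    split_ifs
    exacts [(ht i).1, le_rfl]
  have hCU : ∀ z : ℝ, 0 < z → Cpart f z k ≤ (Upart f z k : ℝ) := by
    intro z hz
    have := acc_main f k z hstep hinv (hA0 z hz) k le_rfl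
    have := hAnn z k le_rfl
    linarith
  have hCnn : ∀ y : ℝ, 0 ≤ Cpart f y k :=
    fun y => Finset.sum_nonneg fun j _ => Finset.sum_nonneg fun i _ => cr_nonneg _ _ _
  have hCx : ∀ y : ℝ, Cpart f y k ≤ (x : ℝ) := by
    intro y
    have h1 : Cpart f y k ≤ ∑ j' ∈ Finset.range k, lenMove (f j') (f (j' + 1)) :=
      Finset.sum_le_sum fun j _ => Finset.sum_le_sum fun i _ => cr_le_abs _ _ _
    have h2 := acc_T f k hstep k le_rfl
    have h3 : 0 ≤ Tfuel (f k) := by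
      obtain ⟨ht, hd⟩ := hinv k le_rfl
      exact add_nonneg (Finset.sum_nonneg fun i _ => (ht i).1) (fsum_nonneg hd)
    rw [hT0] at h2
    linarith
  have hpos0 : ∀ i : Fin n, (f 0).pos i = 0 := by
    intro i; rw [h0]; rfl
  have hUn : ∀ z : ℝ, 0 ≤ z → z < d → n ≤ Upart f z k := by
    intro z hz hzd
    rw [Upart_eq]
    have hup : ∀ i : Fin n, 1 ≤ upC (fun j => (f j).pos i) z k := by
      intro i
      obtain ⟨j, hj, hdj⟩ := hreach i
      exact upC_pos _ z k (by simpa [hpos0 i] using hz) j hj (lt_of_lt_of_le hzd hdj)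
    calc n = ∑ _i : Fin n, 1 := by simp
      _ ≤ _ := Finset.sum_le_sum fun i _ => hup i
  have hUD : ∀ z : ℝ, 0 ≤ z → Upart f z k ≤ Dpart f z k + n := by
    intro z hz
    rw [Upart_eq, Dpart_eq]
    calc (∑ i, upC (fun j => (f j).pos i) z k)
        ≤ ∑ i : Fin n, (dnC (fun j => (f j).pos i) z k + 1) := by
          refine Finset.sum_le_sum fun i _ => ?_
          have h1 := upC_le_dnC (fun j => (f j).pos i) z (by simpa [hpos0 i] using hz) k
          split_ifs at h1 <;> omega
      _ = (∑ i, dnC (fun j => (f j).pos i) z k) + n := by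
          rw [Finset.sum_add_distrib]; simp
  -- the decreasing sequence of thresholds
  obtain ⟨w, hw⟩ : ∃ w : ℕ → ℝ,
      w = fun m : ℕ => d - 1 - ∑ l ∈ Finset.Icc 1 m, 1 / ((n : ℝ) + 2 * (l : ℝ)) := ⟨_, rfl⟩
  have hw0 : w 0 = d - 1 := by simp [hw]
  have hwsucc : ∀ m : ℕ, w (m + 1) = w m - 1 / ((n : ℝ) + 2 * ((m : ℝ) + 1)) := by
    intro m
    simp only [hw]
    rw [Finset.sum_Icc_succ_top (by omega)]
    push_cast
    ring
  have hnR : (1:ℝ) ≤ (n:ℝ) := by exact_mod_cast hn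
  have claim : ∀ m : ℕ, ∀ y : ℝ, 0 < y → y < w m → (n : ℝ) + m < Cpart f y k := by
    intro m
    induction m with
    | zero =>
      intro y hy hyw
      rw [hw0] at hyw
      have haux : ∀ y2 : ℝ, y < y2 → y2 < d → (n : ℝ) * (y2 - y) ≤ Cpart f y k := by
        intro y2 h1 h2
        have hs := slope f k y y2 n h1.le ?_
        · have := hCnn y2; linarith
        · intro z hzIoo
          have hz0 : 0 < z := lt_trans hy hzIoo.1
          have hzd : z < d := lt_trans hzIoo.2 h2
          have := hUn z hz0.le hzd
          omega
      by_contra hc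
      push_neg at hc
      have hd1 : y + 1 < d := by linarith
      obtain ⟨y2, hy2⟩ : ∃ y2 : ℝ, y2 = (y + 1 + d) / 2 := ⟨_, rfl⟩
      have h1 : y < y2 := by rw [hy2]; linarith
      have h2 : y2 < d := by rw [hy2]; linarith
      have h3 : 1 < y2 - y := by rw [hy2]; linarith
      have h4 := haux y2 h1 h2
      push_cast at hc
      nlinarith
    | succ m ih =>
      intro y hy hyw
      rw [hwsucc m] at hyw
      have hr : (0:ℝ) < (n : ℝ) + 2 * ((m : ℝ) + 1) := by positivity
      have hrinv : (0:ℝ) < 1 / ((n : ℝ) + 2 * ((m : ℝ) + 1)) := by positivity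
      have hywm : y < w m := by linarith
      have hCy : (n : ℝ) + m < Cpart f y k := ih y hy hywm
      have haux : ∀ y2 : ℝ, y < y2 → y2 < w m →
          (n : ℝ) + m + ((n : ℝ) + 2 * ((m : ℝ) + 1)) * (y2 - y) < Cpart f y k := by
        intro y2 h1 h2
        have hs := slope f k y y2 (n + 2 * (m + 1)) h1.le ?_
        · have hC2 : (n : ℝ) + m < Cpart f y2 k := ih y2 (lt_trans hy h1) h2
          push_cast at hs
          linarith
        · intro z hzIoo
          have hz0 : 0 < z := lt_trans hy hzIoo.1
          have hzwm : z < w m := lt_trans hzIoo.2 h2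
          have hCz : (n : ℝ) + m < Cpart f z k := ih z hz0 hzwm
          have hU : (n : ℝ) + m < (Upart f z k : ℝ) := lt_of_lt_of_le hCz (hCU z hz0)
          have hUnat : n + m + 1 ≤ Upart f z k := by
            have : ((n + m : ℕ) : ℝ) < (Upart f z k : ℝ) := by push_cast; linarith
            exact_mod_cast this
          have := hUD z hz0.le
          omega
      by_contra hc
      push_neg at hc
      push_cast at hc
      obtain ⟨a, hadef⟩ : ∃ a : ℝ,
          a = (Cpart f y k - ((n : ℝ) + m)) / ((n : ℝ) + 2 * ((m : ℝ) + 1)) := ⟨_, rfl⟩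
      have ha : 0 < a := by rw [hadef]; exact div_pos (by linarith) hr
      have har : a * ((n : ℝ) + 2 * ((m : ℝ) + 1)) = Cpart f y k - ((n : ℝ) + m) := by
        rw [hadef, div_mul_cancel₀ _ (ne_of_gt hr)]
      have haup : a * ((n : ℝ) + 2 * ((m : ℝ) + 1)) ≤ 1 := by rw [har]; linarith
      have hwy : 1 / ((n : ℝ) + 2 * ((m : ℝ) + 1)) < w m - y := by linarith
      have haw : a < w m - y := by
        rw [div_lt_iff₀ hr] at hwy
        by_contra hge
        push_neg at hge
        have hmul : (w m - y) * ((n : ℝ) + 2 * ((m : ℝ) + 1))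
            ≤ a * ((n : ℝ) + 2 * ((m : ℝ) + 1)) :=
          mul_le_mul_of_nonneg_right hge hr.le
        linarith
      obtain ⟨y2, hy2⟩ : ∃ y2 : ℝ, y2 = y + (a + (w m - y)) / 2 := ⟨_, rfl⟩
      have h1 : y < y2 := by
        rw [hy2]
        have : 0 < w m - y := by linarith
        linarith
      have h2 : y2 < w m := by rw [hy2]; linarith
      have h3 : a < y2 - y := by rw [hy2]; linarith
      have h4 := haux y2 h1 h2
      have h5 : a * ((n : ℝ) + 2 * ((m : ℝ) + 1))
          < (y2 - y) * ((n : ℝ) + 2 * ((m : ℝ) + 1)) :=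
        mul_lt_mul_of_pos_right h3 hr
      rw [har] at h5
      nlinarith
  have hwK : w (x - n) ≤ 0 := by
    by_contra hpos
    push_neg at hpos
    have hy : 0 < w (x - n) / 2 := by linarith
    have hy2 : w (x - n) / 2 < w (x - n) := by linarith
    have h1 := claim (x - n) (w (x - n) / 2) hy hy2
    have h2 := hCx (w (x - n) / 2)
    have hcast : (n : ℝ) + ((x - n : ℕ) : ℝ) = (x : ℝ) := by
      rw [Nat.cast_sub hx]; ring
    rw [hcast] at h1
    linarith
  have hfinal : d - 1 - ∑ l ∈ Finset.Icc 1 (x - n), 1 / ((n : ℝ) + 2 * (l : ℝ)) ≤ 0 := by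
    rw [hw] at hwK; exact hwK
  linarith
end

section
/- In the Maddex model, if a plan reaches a state in which the jeep's position is d > 0 and subsequently reaches a state in which the jeep's position is 0, then d ≤ D_N = (N·C + 1)/2. In other words, a round trip from the fuel station cannot go farther than D_N. -/
/-- A state of Maddex' jeep problem with `N` cans: the jeep's position, its
tank content, and the position and fuel content of each can. -/
structure MaddexState (N : ℕ) where
  pos : ℝ
  tank : ℝ
  canPos : Fin N → ℝ
  canFuel : Fin N → ℝ

/-- Admissible moves of Maddex' jeep problem with can capacity `C` and at most
`B` cans carried at a time: drive (taking along at most `B` cans located at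
the jeep's position and consuming one tankload per unit of distance), move
fuel from a can at the jeep's position into the tank, move fuel between two
cans at the jeep's position, or (at the fuel station `0`) fill the tank and
any cans located at `0` up to their capacities.  Fuel is never moved from the
tank into a can. -/
inductive MaddexStep {N : ℕ} (C : ℝ) (B : ℕ) :
    MaddexState N → MaddexState N → Prop
  | drive (s : MaddexState N) (p' : ℝ) (S : Finset (Fin N))
      (hcard : S.card ≤ B) (hS : ∀ i ∈ S, s.canPos i = s.pos)
      (hfuel : 0 ≤ s.tank - |p' - s.pos|) :
      MaddexStep C B s ⟨p', s.tank - |p' - s.pos|,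
        fun i => if i ∈ S then p' else s.canPos i, s.canFuel⟩
  | canToTank (s : MaddexState N) (i : Fin N) (a : ℝ)
      (hloc : s.canPos i = s.pos) (ha : 0 ≤ a)
      (htank : s.tank + a ≤ 1) (hcan : 0 ≤ s.canFuel i - a) :
      MaddexStep C B s ⟨s.pos, s.tank + a, s.canPos,
        Function.update s.canFuel i (s.canFuel i - a)⟩
  | canToCan (s : MaddexState N) (i j : Fin N) (hij : i ≠ j) (a : ℝ)
      (hi : s.canPos i = s.pos) (hj : s.canPos j = s.pos) (ha : 0 ≤ a)
      (hfull : s.canFuel j + a ≤ C) (hcan : 0 ≤ s.canFuel i - a) :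
      MaddexStep C B s ⟨s.pos, s.tank, s.canPos,
        Function.update (Function.update s.canFuel i (s.canFuel i - a)) j
          (s.canFuel j + a)⟩
  | refill (s : MaddexState N) (hp : s.pos = 0) (t' : ℝ) (c' : Fin N → ℝ)
      (ht0 : s.tank ≤ t') (ht1 : t' ≤ 1)
      (hc : ∀ i, s.canFuel i ≤ c' i ∧ c' i ≤ C ∧
        (s.canPos i ≠ 0 → c' i = s.canFuel i)) :
      MaddexStep C B s ⟨s.pos, t', s.canPos, c'⟩

/-- The initial state of Maddex' jeep problem: the jeep and all cans are at
the fuel station `0`, the tank is full and every can is full. -/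
def maddexInit (N : ℕ) (C : ℝ) : MaddexState N :=
  ⟨0, 1, fun _ => 0, fun _ => C⟩
/-- Total fuel in the system. -/
def fuelTotal {N : ℕ} (s : MaddexState N) : ℝ := s.tank + ∑ i, s.canFuel i

lemma sum_update_univ {N : ℕ} (f : Fin N → ℝ) (i : Fin N) (b : ℝ) :
    ∑ x, Function.update f i b x = (∑ x, f x) - f i + b := by
  rw [Finset.sum_update_of_mem (Finset.mem_univ i),
    Finset.sum_eq_sum_sdiff_singleton_add (Finset.mem_univ i) f]
  ring

lemma nonneg_step {N : ℕ} {C : ℝ} {B : ℕ} {s t : MaddexState N}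
    (h : MaddexStep C B s t) (ht : 0 ≤ s.tank) (hc : ∀ i, 0 ≤ s.canFuel i) :
    0 ≤ t.tank ∧ ∀ i, 0 ≤ t.canFuel i := by
  cases h with
  | drive p' S hcard hS hfuel => exact ⟨hfuel, hc⟩
  | canToTank i a hloc ha htank hcan =>
    refine ⟨by dsimp; linarith, fun j => ?_⟩
    rcases eq_or_ne j i with rfl | hne
    · simpa using hcan
    · simpa [Function.update_of_ne hne] using hc j
  | canToCan i j hij a hi hj ha hfull hcan =>
    refine ⟨ht, fun k => ?_⟩
    rcases eq_or_ne k j with rfl | hkj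
    · simp only [Function.update_self]; linarith [hc k]
    · rcases eq_or_ne k i with rfl | hki
      · simpa [Function.update_of_ne hkj] using hcan
      · simp only [Function.update_of_ne hkj, Function.update_of_ne hki]
        exact hc k
  | refill hp t' c' ht0 ht1 hcc =>
    exact ⟨le_trans ht ht0, fun i => le_trans (hc i) (hcc i).1⟩

lemma reachable_nonneg {N : ℕ} {C : ℝ} {B : ℕ} {s : MaddexState N}
    (hC : 0 ≤ C)
    (h : Relation.ReflTransGen (MaddexStep C B) (maddexInit N C) s) :
    0 ≤ s.tank ∧ ∀ i, 0 ≤ s.canFuel i := by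
  induction h with
  | refl => exact ⟨zero_le_one, fun _ => hC⟩
  | tail _ hstep ih => exact nonneg_step hstep ih.1 ih.2

lemma reachable_bound {N : ℕ} {C : ℝ} {B : ℕ} {s : MaddexState N}
    (h : Relation.ReflTransGen (MaddexStep C B) (maddexInit N C) s) :
    fuelTotal s + |s.pos| ≤ (N : ℝ) * C + 1 := by
  induction h with
  | refl =>
    simp only [fuelTotal, maddexInit, abs_zero, Finset.sum_const, Finset.card_univ,
      Fintype.card_fin, nsmul_eq_mul, add_zero]
    linarith
  | tail htail hstep ih =>
    rename_i s t
    cases hstep with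
    | drive p' S hcard hS hfuel =>
      have habs : |p'| ≤ |s.pos| + |p' - s.pos| := by
        have := abs_sub_abs_le_abs_sub p' s.pos
        linarith [abs_nonneg (p' - s.pos)]
      simp only [fuelTotal] at ih ⊢
      linarith
    | canToTank i a hloc ha htank hcan =>
      simp only [fuelTotal] at ih ⊢
      rw [sum_update_univ]
      linarith
    | canToCan i j hij a hi hj ha hfull hcan =>
      simp only [fuelTotal] at ih ⊢
      rw [sum_update_univ, sum_update_univ, Function.update_of_ne (Ne.symm hij)]
      linarith
    | refill hp t' c' ht0 ht1 hcc =>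
      simp only [fuelTotal]
      rw [hp]
      simp only [abs_zero, add_zero]
      have hsum : ∑ i, c' i ≤ ∑ _i : Fin N, C :=
        Finset.sum_le_sum fun i _ => (hcc i).2.1
      simp only [Finset.sum_const, Finset.card_univ, Fintype.card_fin,
        nsmul_eq_mul] at hsum
      linarith

lemma return_bound {N : ℕ} {C : ℝ} {B : ℕ} (hC : 0 ≤ C) {s s' : MaddexState N}
    (h : Relation.ReflTransGen (MaddexStep C B) s s')
    (hreach : Relation.ReflTransGen (MaddexStep C B) (maddexInit N C) s)
    (hp : s'.pos = 0) : |s.pos| ≤ fuelTotal s := by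
  induction h using Relation.ReflTransGen.head_induction_on with
  | refl =>
    obtain ⟨h1, h2⟩ := reachable_nonneg hC hreach
    rw [hp]
    simp only [abs_zero, fuelTotal]
    have : 0 ≤ ∑ i, s'.canFuel i := Finset.sum_nonneg fun i _ => h2 i
    linarith
  | head hstep htail ih =>
    rename_i s t
    have hreach' := hreach.tail hstep
    have ihc := ih hreach'
    obtain ⟨h1, h2⟩ := reachable_nonneg hC hreach
    cases hstep with
    | drive p' S hcard hS hfuel =>
      simp only [fuelTotal] at ihc ⊢
      have habs : |s.pos| ≤ |p'| + |p' - s.pos| := by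
        have := abs_sub_abs_le_abs_sub s.pos p'
        rw [abs_sub_comm] at this
        linarith [abs_nonneg (p' - s.pos)]
      linarith
    | canToTank i a hloc ha htank hcan =>
      simp only [fuelTotal] at ihc ⊢
      rw [sum_update_univ] at ihc
      linarith
    | canToCan i j hij a hi hj ha hfull hcan =>
      simp only [fuelTotal] at ihc ⊢
      rw [sum_update_univ, sum_update_univ, Function.update_of_ne (Ne.symm hij)] at ihc
      linarith
    | refill hp' t' c' ht0 ht1 hcc =>
      rw [hp']
      simp only [abs_zero, fuelTotal]
      have : 0 ≤ ∑ i, s.canFuel i := Finset.sum_nonneg fun i _ => h2 i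
      linarith

/-- In the Maddex model, if a plan reaches a state with jeep position `d > 0`
and subsequently a state with jeep position `0`, then
`d ≤ D_N = (N·C + 1)/2`: a round trip cannot go farther than `D_N`. -/
theorem maddex_roundtrip_bound (N B : ℕ) (C : ℝ) (hC : 0 < C) (hB : 1 ≤ B)
    (d : ℝ) (hd : 0 < d) (s₁ s₂ : MaddexState N)
    (h₁ : Relation.ReflTransGen (MaddexStep C B) (maddexInit N C) s₁)
    (h₂ : Relation.ReflTransGen (MaddexStep C B) s₁ s₂)
    (hp₁ : s₁.pos = d) (hp₂ : s₂.pos = 0) :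
    d ≤ ((N : ℝ) * C + 1) / 2 := by
  have hb1 := reachable_bound h₁
  have hb2 := return_bound hC.le h₂ h₁ hp₂
  rw [hp₁, abs_of_pos hd] at hb1 hb2
  linarith
end

section
/- In the Maddex model with N ≥ 1 cans, there is a plan whose final state has the jeep at position 0, one distinguished can at position D_{N−1} = ((N−1)·C + 1)/2 with content C, and the other N − 1 cans at position 0, such that the distinguished can has content C in every state of the plan (no fuel of this can is ever used). That is, the jeep can dump a full can at D_{N−1} without using fuel of that can and eventually return to the fuel station without leaving any of the other cans in the desert. -/
/-!
Induction on the number `k` of helper cans, relative to a *station* at `σ`: a position where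
the jeep can always fill its tank and the cans standing there. With no helper, the jeep fills
up, carries the distinguished can `i₀` half a unit out and drives back. With `k + 1` helpers,
one helper `g` serves as a shuttle. Escorted by `g`, which is refuelled at `σ` before each step
of at most `1/2`, the other cans (`i₀` among them) move to `σ + C/2`, where `g` is then parked
with exactly `C/2` fuel. This turns `σ + C/2` into a station: the jeep can take `g` to `σ` and
back on the fuel the two hold, and each such round trip leaves `min 1 (C/2)` fuel to spare for
the cans at `σ + C/2`. By induction, `i₀` now gets from `σ + C/2` to
`σ + C/2 + D_k = σ + D_{k+1}`, and finally `g` escorts the helpers back to `σ`.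
-/

theorem exists_seq_of_reflTransGen {α : Type*} {R : α → α → Prop} {a b : α}
    (h : Relation.ReflTransGen R a b) :
    ∃ (k : ℕ) (f : ℕ → α), f 0 = a ∧ f k = b ∧ ∀ j < k, R (f j) (f (j + 1)) := by
  induction h with
  | refl => exact ⟨0, fun _ => a, rfl, rfl, fun j hj => absurd hj (Nat.not_lt_zero j)⟩
  | @tail b c _ hbc ih =>
    obtain ⟨k, f, hf0, hfk, hf⟩ := ih
    refine ⟨k + 1, Function.update f (k + 1) c, by simp [hf0], by simp, fun j hj => ?_⟩
    rcases Nat.lt_succ_iff_lt_or_eq.1 hj with hj | rfl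
    · rw [Function.update_of_ne (by omega), Function.update_of_ne (by omega)]
      exact hf j hj
    · simpa [hfk] using hbc

namespace Maddex

open Function Set

theorem exists_fuel_split {t f d m : ℝ} (ht1 : t ≤ 1) (hd : 0 ≤ d) (hmf : m ≤ f)
    (hmd : m ≤ t + f - d) :
    ∃ τ φ, 0 ≤ τ ∧ τ ≤ 1 ∧ m ≤ φ ∧ φ ≤ f ∧ τ + φ = t + f - d := by
  refine ⟨t + f - d - min f (t + f - d), min f (t + f - d), ?_, ?_, le_min hmf hmd,
    min_le_left _ _, by ring⟩
  · linarith [min_le_right f (t + f - d)]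
  · rcases min_choice f (t + f - d) with h | h <;> rw [h] <;> linarith

theorem exists_mem_uIcc_abs_sub_le {x y ℓ : ℝ} (n : ℕ) (h : |y - x| ≤ (n + 1) * ℓ) :
    ∃ z ∈ uIcc x y, |z - x| ≤ ℓ ∧ |y - z| ≤ n * ℓ := by
  have hn : (0 : ℝ) < n + 1 := by positivity
  have hz : x + (y - x) / (n + 1) - x = (y - x) / (n + 1) := by ring
  have hz' : y - (x + (y - x) / (n + 1)) = (y - x) * n / (n + 1) := by field_simp; ring
  refine ⟨x + (y - x) / (n + 1), ?_, ?_, ?_⟩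
  · have h1 : (y - x) / (n + 1) = (1 / (n + 1)) * (y - x) := by ring
    have ht0 : 0 ≤ 1 / ((n : ℝ) + 1) := by positivity
    have ht1 : 1 / ((n : ℝ) + 1) ≤ 1 := by rw [div_le_one hn]; linarith
    rw [h1, mem_uIcc]
    rcases le_total x y with hxy | hxy
    · left; constructor <;> nlinarith
    · right; constructor <;> nlinarith
  · rw [hz, abs_div, abs_of_pos hn, div_le_iff₀ hn]; linarith
  · rw [hz', abs_div, abs_mul, abs_of_pos hn, Nat.abs_cast, div_le_iff₀ hn]
    nlinarith [abs_nonneg (y - x), (Nat.cast_nonneg n : (0:ℝ) ≤ n)]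

theorem abs_sub_add_abs_sub_of_mem_uIcc {x y z : ℝ} (hz : z ∈ uIcc x y) :
    |z - x| + |y - z| = |y - x| := by
  rcases mem_uIcc.1 hz with ⟨h1, h2⟩ | ⟨h1, h2⟩
  · rw [abs_of_nonneg (by linarith), abs_of_nonneg (by linarith), abs_of_nonneg (by linarith)]
    ring
  · rw [abs_of_nonpos (by linarith), abs_of_nonpos (by linarith), abs_of_nonpos (by linarith)]
    ring

theorem abs_sub_le_of_mem_uIcc {x y z σ r : ℝ} (hz : z ∈ uIcc x y) (hx : |x - σ| ≤ r)
    (hy : |y - σ| ≤ r) : |z - σ| ≤ r := by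
  rw [abs_sub_le_iff] at *
  rcases mem_uIcc.1 hz with ⟨h1, h2⟩ | ⟨h1, h2⟩ <;> constructor <;> linarith

variable {N : ℕ}

def Step (C : ℝ) (B : ℕ) (i₀ : Fin N) (s t : MaddexState N) : Prop :=
  MaddexStep C B s t ∧ t.canFuel i₀ = s.canFuel i₀

abbrev Reach (C : ℝ) (B : ℕ) (i₀ : Fin N) : MaddexState N → MaddexState N → Prop :=
  Relation.ReflTransGen (Step C B i₀)

structure Valid (C : ℝ) (i₀ : Fin N) (s : MaddexState N) : Prop where
  tank_nonneg : 0 ≤ s.tank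
  tank_le_one : s.tank ≤ 1
  fuel_nonneg : ∀ i, 0 ≤ s.canFuel i
  fuel_le : ∀ i, s.canFuel i ≤ C
  fuel_i₀ : s.canFuel i₀ = C

variable {C : ℝ} {B : ℕ} {i₀ : Fin N}

theorem Valid.capacity_nonneg {s : MaddexState N} (hv : Valid C i₀ s) : 0 ≤ C :=
  hv.fuel_i₀ ▸ hv.fuel_nonneg i₀

theorem Step.valid {s t : MaddexState N} (h : Step C B i₀ s t) (hs : Valid C i₀ s) :
    Valid C i₀ t := by
  obtain ⟨h, hi₀⟩ := h
  obtain ⟨ht0, ht1, hf0, hfC, hfi₀⟩ := hs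
  cases h with
  | drive p' S _ _ hfuel =>
    exact ⟨hfuel, by linarith [abs_nonneg (p' - s.pos)], hf0, hfC, hi₀.trans hfi₀⟩
  | canToTank i a _ ha htank hcan =>
    refine ⟨by linarith, htank, fun j => ?_, fun j => ?_, hi₀.trans hfi₀⟩ <;>
      simp only [update_apply] <;> split_ifs <;> subst_vars <;> linarith [hf0 j, hfC j]
  | canToCan i j _ a _ _ ha hfull hcan =>
    refine ⟨ht0, ht1, fun k => ?_, fun k => ?_, hi₀.trans hfi₀⟩ <;>
      simp only [update_apply] <;> split_ifs <;> subst_vars <;> linarith [hf0 k, hfC k]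
  | refill _ t' c' ht0' ht1' hc =>
    exact ⟨by linarith, ht1', fun i => by linarith [hf0 i, (hc i).1], fun i => (hc i).2.1,
      hi₀.trans hfi₀⟩

theorem Reach.valid {s t : MaddexState N} (h : Reach C B i₀ s t) (hs : Valid C i₀ s) :
    Valid C i₀ t := by
  induction h with
  | refl => exact hs
  | tail _ hst ih => exact hst.valid ih

theorem Step.reach_of_eq {s t t' : MaddexState N} (h : Step C B i₀ s t) (e : t = t') :
    Reach C B i₀ s t' :=
  e ▸ .single h

theorem step_drive (s : MaddexState N) (y : ℝ) (h : |y - s.pos| ≤ s.tank) :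
    Step C B i₀ s { s with pos := y, tank := s.tank - |y - s.pos| } := by
  refine ⟨?_, rfl⟩
  convert MaddexStep.drive (C := C) (B := B) s y ∅ (by simp) (by simp) (by linarith) using 2
  simp

theorem step_carry (hB : 1 ≤ B) (s : MaddexState N) (g : Fin N) (y : ℝ)
    (hg : s.canPos g = s.pos) (h : |y - s.pos| ≤ s.tank) :
    Step C B i₀ s
      { s with pos := y, tank := s.tank - |y - s.pos|, canPos := update s.canPos g y } := by
  refine ⟨?_, rfl⟩
  convert MaddexStep.drive (C := C) s y {g} (by simpa using hB) (by simpa using hg)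
    (by linarith) using 2
  ext i
  simp [update_apply]

theorem step_sip (s : MaddexState N) (g : Fin N) (a : ℝ) (hg : g ≠ i₀)
    (hgs : s.canPos g = s.pos) (ha : 0 ≤ a) (ht : s.tank + a ≤ 1) (hc : a ≤ s.canFuel g) :
    Step C B i₀ s
      { s with tank := s.tank + a, canFuel := update s.canFuel g (s.canFuel g - a) } :=
  ⟨.canToTank s g a hgs ha ht (by linarith), update_of_ne hg.symm _ _⟩

theorem step_pour (s : MaddexState N) (g h : Fin N) (a : ℝ) (hgh : g ≠ h) (hg : g ≠ i₀)
    (hh : h ≠ i₀) (hgs : s.canPos g = s.pos) (hhs : s.canPos h = s.pos) (ha : 0 ≤ a)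
    (hfull : s.canFuel h + a ≤ C) (hc : a ≤ s.canFuel g) :
    Step C B i₀ s
      { s with canFuel := update (update s.canFuel g (s.canFuel g - a)) h (s.canFuel h + a) } :=
  ⟨.canToCan s g h hgh a hgs hhs ha hfull (by linarith), by
    simp [update_of_ne hh.symm, update_of_ne hg.symm]⟩

theorem reach_fetch (hB : 1 ≤ B) (s : MaddexState N) (X : Fin N)
    (hd : 2 * |s.canPos X - s.pos| ≤ s.tank) :
    Reach C B i₀ s
      { s with tank := s.tank - 2 * |s.canPos X - s.pos|, canPos := update s.canPos X s.pos } :=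
  .trans (.single (step_drive s (s.canPos X) (by linarith [abs_nonneg (s.canPos X - s.pos)])))
    ((step_carry hB _ X s.pos rfl (by simp only [abs_sub_comm s.pos]; linarith)).reach_of_eq (by
      simp only [abs_sub_comm s.pos, MaddexState.mk.injEq, true_and, and_true]
      ring))

theorem reach_carry_of_abs_le_one (hB : 1 ≤ B) {s : MaddexState N} {g : Fin N} {y τ φ : ℝ}
    (hv : Valid C i₀ s) (hg : g ≠ i₀) (hgs : s.canPos g = s.pos) (hd : |y - s.pos| ≤ 1)
    (hτ0 : 0 ≤ τ) (hτ1 : τ ≤ 1) (hφ0 : 0 ≤ φ) (hφ : φ ≤ s.canFuel g)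
    (hsum : τ + φ = s.tank + s.canFuel g - |y - s.pos|) :
    Reach C B i₀ s ⟨y, τ, update s.canPos g y, update s.canFuel g φ⟩ := by
  -- sip just enough to make the leg, and the rest on arrival
  obtain ⟨a, ha0, haφ, hat, hda⟩ : ∃ a, 0 ≤ a ∧ a ≤ s.canFuel g - φ ∧ s.tank + a ≤ 1 ∧
      |y - s.pos| ≤ s.tank + a := by
    refine ⟨min (s.canFuel g - φ) (1 - s.tank), le_min (by linarith) (by linarith [hv.2]),
      min_le_left _ _, by linarith [min_le_right (s.canFuel g - φ) (1 - s.tank)], ?_⟩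
    rcases min_choice (s.canFuel g - φ) (1 - s.tank) with h | h <;> rw [h] <;> linarith
  refine .trans (.single (step_sip s g a hg hgs ha0 hat (by linarith)))
    (.trans (.single (step_carry hB _ g y hgs hda))
      ((step_sip _ g (s.canFuel g - a - φ) hg (by simp) (by linarith) (by simp; linarith)
        (by simp [hφ0])).reach_of_eq ?_))
  simp only [update_self, update_idem, MaddexState.mk.injEq, true_and]
  constructor
  · linarith
  · congr 1; ring

theorem reach_carry (hB : 1 ≤ B) {s : MaddexState N} {g : Fin N} {y τ φ : ℝ}
    (hv : Valid C i₀ s) (hg : g ≠ i₀) (hgs : s.canPos g = s.pos)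
    (hτ0 : 0 ≤ τ) (hτ1 : τ ≤ 1) (hφ0 : 0 ≤ φ) (hφ : φ ≤ s.canFuel g)
    (hsum : τ + φ = s.tank + s.canFuel g - |y - s.pos|) :
    Reach C B i₀ s ⟨y, τ, update s.canPos g y, update s.canFuel g φ⟩ := by
  obtain ⟨n, hn⟩ := exists_nat_ge |y - s.pos|
  induction n generalizing s with
  | zero =>
    exact reach_carry_of_abs_le_one hB hv hg hgs (hn.trans (by simp)) hτ0 hτ1 hφ0 hφ hsum
  | succ n ih =>
    obtain ⟨z, hz, hzs, hyz⟩ := exists_mem_uIcc_abs_sub_le (ℓ := 1) n (by simpa using hn)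
    have hd := abs_sub_add_abs_sub_of_mem_uIcc hz
    obtain ⟨τ', φ', hτ0', hτ1', hφφ', hφ', hsum'⟩ :=
      exists_fuel_split (d := |z - s.pos|) hv.tank_le_one (abs_nonneg _) hφ
        (by linarith [abs_nonneg (y - z)])
    have h₁ := reach_carry_of_abs_le_one (B := B) hB hv hg hgs (by simpa using hzs) hτ0' hτ1'
      (hφ0.trans hφφ') hφ' hsum'
    have h₂ := ih (h₁.valid hv) (by simp) (by simpa using hφφ') (by simp; linarith)
      (by simpa using hyz)
    convert h₁.trans h₂ using 2 <;> simp

/-- Between `s` and `t` only the cans in `W` moved and only the cans in `A` changed fuel. -/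
def Frame (W A : Finset (Fin N)) (s t : MaddexState N) : Prop :=
  ∀ i, (i ∉ W → t.canPos i = s.canPos i) ∧ (i ∉ A → t.canFuel i = s.canFuel i)

section Frame

variable {W W' A A' : Finset (Fin N)} {s t u : MaddexState N}

theorem Frame.refl (W A : Finset (Fin N)) (s : MaddexState N) : Frame W A s s :=
  fun _ => ⟨fun _ => rfl, fun _ => rfl⟩

theorem Frame.trans (h₁ : Frame W A s t) (h₂ : Frame W A t u) : Frame W A s u :=
  fun i => ⟨fun hi => ((h₂ i).1 hi).trans ((h₁ i).1 hi),
    fun hi => ((h₂ i).2 hi).trans ((h₁ i).2 hi)⟩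

theorem Frame.mono (hW : W ⊆ W') (hA : A ⊆ A') (h : Frame W A s t) : Frame W' A' s t :=
  fun i => ⟨fun hi => (h i).1 (fun h' => hi (hW h')), fun hi => (h i).2 (fun h' => hi (hA h'))⟩

theorem Frame.trans_of_subset (h₁ : Frame A A s t) (h₂ : Frame W A t u) (hW : W ⊆ A) :
    Frame A A s u :=
  h₁.trans (h₂.mono hW subset_rfl)

end Frame

open Classical in
noncomputable def topUp (C : ℝ) (L : Set ℝ) (A : Finset (Fin N)) (s : MaddexState N) :
    Fin N → ℝ :=
  fun i => if i ∈ A ∧ s.canPos i ∈ L then C else s.canFuel i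

noncomputable def refuel (C : ℝ) (L : Set ℝ) (A : Finset (Fin N)) (s : MaddexState N) :
    MaddexState N :=
  { s with tank := 1, canFuel := topUp C L A s }

theorem topUp_of_notMem {L : Set ℝ} {A : Finset (Fin N)} {s : MaddexState N} {i : Fin N}
    (hi : i ∉ A) : topUp C L A s i = s.canFuel i := by
  simp [topUp, hi]

/-- `L` holds the positions of this station and of those below it, where cans get topped up
too; `r` fixes the shuttles serving the stations below, which are the cans outside `A`. -/
def Station (C : ℝ) (B : ℕ) (i₀ : Fin N) (σ : ℝ) (L : Set ℝ) (A : Finset (Fin N))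
    (r : MaddexState N) : Prop :=
  ∀ s, Valid C i₀ s → s.pos = σ → Frame A A r s → Reach C B i₀ s (refuel C L A s)

theorem station_zero (A : Finset (Fin N)) (r : MaddexState N) :
    Station C B i₀ 0 {0} A r := by
  intro s hv hs _
  refine .single ⟨.refill s hs 1 _ hv.tank_le_one le_rfl fun i => ?_, ?_⟩
  · simp only [topUp, mem_singleton_iff]
    split_ifs with h
    · exact ⟨hv.fuel_le i, le_rfl, fun h' => absurd h.2 h'⟩
    · exact ⟨le_rfl, hv.fuel_le i, fun _ => rfl⟩
  · change topUp C {0} A s i₀ = s.canFuel i₀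
    unfold topUp
    split_ifs
    · exact hv.fuel_i₀.symm
    · rfl

theorem frame_update {A : Finset (Fin N)} {g : Fin N} (hgA : g ∈ A) (s : MaddexState N)
    (p τ y φ : ℝ) : Frame {g} A s ⟨p, τ, update s.canPos g y, update s.canFuel g φ⟩ := by
  intro i
  constructor <;> intro hi
  · simp_all
  · simp [update_of_ne (ne_of_mem_of_not_mem hgA hi).symm]

theorem frame_ferry {L : Set ℝ} {A : Finset (Fin N)} {g : Fin N} (hgA : g ∈ A)
    (s : MaddexState N) (y τ φ : ℝ) :
    Frame {g} A s ⟨y, τ, update s.canPos g y, update (topUp C L A s) g φ⟩ := by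
  intro i
  constructor <;> intro hi
  · simp_all
  · simp [update_of_ne (ne_of_mem_of_not_mem hgA hi).symm, topUp_of_notMem hi]

/-- The state in which each round trip of the shuttle `g` to the station at `σ` starts and ends. -/
structure Docked (C σ : ℝ) (L : Set ℝ) (A : Finset (Fin N)) (g : Fin N) (u : MaddexState N) :
    Prop where
  pos : u.pos = σ + C / 2
  tank : u.tank = 1
  canPos_g : u.canPos g = u.pos
  canFuel_g : u.canFuel g = C / 2
  full : ∀ i ∈ A, i ≠ g → u.canPos i ∈ L → u.canFuel i = C

section Station

variable {σ : ℝ} {L : Set ℝ} {A : Finset (Fin N)} {r : MaddexState N}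

/-- The jeep takes `g` to the station, refuels there and takes `g` on to `y`. -/
theorem Station.reach_ferry (hS : Station C B i₀ σ L A r) (hσ : σ ∈ L) (hB : 1 ≤ B)
    {s : MaddexState N} {g : Fin N} {y τ φ : ℝ} (hv : Valid C i₀ s) (hr : Frame A A r s)
    (hgA : g ∈ A) (hg : g ≠ i₀) (hgs : s.canPos g = s.pos)
    (hpool : |s.pos - σ| ≤ s.tank + s.canFuel g)
    (hτ0 : 0 ≤ τ) (hτ1 : τ ≤ 1) (hφ0 : 0 ≤ φ) (hφ : φ ≤ C) (hsum : τ + φ = 1 + C - |y - σ|) :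
    Reach C B i₀ s ⟨y, τ, update s.canPos g y, update (topUp C L A s) g φ⟩ := by
  obtain ⟨τ₁, φ₁, hτ₁0, hτ₁1, hφ₁0, hφ₁, hsum₁⟩ :=
    exists_fuel_split (d := |σ - s.pos|) (m := 0) hv.tank_le_one (abs_nonneg _)
      (hv.fuel_nonneg g) (by rw [abs_sub_comm]; linarith)
  have h₁ := reach_carry (B := B) hB hv hg hgs hτ₁0 hτ₁1 hφ₁0 hφ₁ hsum₁
  have h₂ := hS _ (h₁.valid hv) rfl
    (hr.trans_of_subset (frame_update hgA _ _ _ _ _) (by simpa using hgA))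
  have h₃ := reach_carry (B := B) (y := y) hB (h₂.valid (h₁.valid hv)) hg
    (by simp [refuel]) hτ0 hτ1 hφ0 (by simp [refuel, topUp, hgA, hσ, hφ])
    (by simpa [refuel, topUp, hgA, hσ] using hsum)
  convert h₁.trans (h₂.trans h₃) using 2
  · simp [refuel]
  · ext i
    rcases eq_or_ne i g with rfl | hi
    · simp
    · simp only [refuel, topUp, update_of_ne hi]
      split_ifs <;> simp_all

theorem Station.exists_ferry (hS : Station C B i₀ σ L A r) (hσ : σ ∈ L) (hB : 1 ≤ B)
    {s : MaddexState N} {g : Fin N} {y : ℝ} (hv : Valid C i₀ s) (hr : Frame A A r s)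
    (hgA : g ∈ A) (hg : g ≠ i₀) (hgs : s.canPos g = s.pos) (hpool : |s.pos - σ| ≤ s.canFuel g)
    (hy : |y - σ| ≤ C / 2) :
    ∃ t, Reach C B i₀ s t ∧ t.pos = y ∧ t.tank = 1 ∧ t.canPos g = y ∧
      t.canFuel g = C - |y - σ| ∧ Frame {g} A s t :=
  ⟨_, hS.reach_ferry (τ := 1) (φ := C - |y - σ|) hσ hB hv hr hgA hg hgs
    (by linarith [hv.tank_nonneg]) zero_le_one le_rfl (by linarith [abs_nonneg (y - σ)])
    (by linarith [abs_nonneg (y - σ)]) (by ring),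
    rfl, rfl, by simp, by simp, frame_ferry hgA _ _ _ _⟩

theorem Station.exists_shift (hS : Station C B i₀ σ L A r) (hσ : σ ∈ L) (hB : 1 ≤ B)
    {g X : Fin N} (hgA : g ∈ A) (hXA : X ∈ A) (hg : g ≠ i₀) (hXg : X ≠ g) {y : ℝ}
    (hy : |y - σ| ≤ C / 2) {s : MaddexState N} (hv : Valid C i₀ s) (hr : Frame A A r s)
    (hgs : s.canPos g = s.pos) (hpool : |s.pos - σ| ≤ s.canFuel g)
    (hX : |s.canPos X - σ| ≤ C / 2) :
    ∃ t, Reach C B i₀ s t ∧ t.pos = y ∧ t.canPos g = y ∧ t.canPos X = y ∧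
      |y - σ| ≤ t.canFuel g ∧ Frame {g, X} A s t := by
  obtain ⟨n, hn⟩ := exists_nat_ge (2 * |y - s.canPos X|)
  induction n generalizing s with
  | zero =>
    obtain ⟨t, hst, htp, -, htg, htf, hfr⟩ := hS.exists_ferry hσ hB hv hr hgA hg hgs hpool hy
    refine ⟨t, hst, htp, htg, ?_, by linarith, hfr.mono (by simp) subset_rfl⟩
    rw [(hfr X).1 (by simpa using hXg)]
    have : y - s.canPos X = 0 := abs_nonpos_iff.1 (by simp at hn; linarith)
    linarith
  | succ n ih =>
    obtain ⟨z, hz, hzx, hyz⟩ := exists_mem_uIcc_abs_sub_le (x := s.canPos X) (y := y)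
      (ℓ := 1 / 2) n (by push_cast at hn; linarith)
    have hzσ := abs_sub_le_of_mem_uIcc hz hX hy
    obtain ⟨t₁, h₁, ht₁p, ht₁t, ht₁g, ht₁f, hfr₁⟩ :=
      hS.exists_ferry hσ hB hv hr hgA hg hgs hpool hzσ
    have hXt₁ : t₁.canPos X = s.canPos X := (hfr₁ X).1 (by simpa using hXg)
    have h₂ := reach_fetch (C := C) (i₀ := i₀) hB t₁ X
      (by rw [hXt₁, ht₁p, ht₁t, abs_sub_comm]; linarith)
    set t₂ : MaddexState N :=
      { t₁ with tank := t₁.tank - 2 * |t₁.canPos X - t₁.pos|, canPos := update t₁.canPos X t₁.pos }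
    have hfr₂ : Frame {g, X} A s t₂ := (hfr₁.mono (by simp) subset_rfl).trans
      fun i => ⟨fun hi => by simp_all [t₂], fun _ => rfl⟩
    obtain ⟨t, h, htp, htg, htX, htf, hfr⟩ := ih (h₂.valid (h₁.valid hv))
      (hr.trans_of_subset hfr₂ (by simp [Finset.insert_subset_iff, hgA, hXA]))
      (by simp [t₂, update_of_ne hXg.symm, ht₁g, ht₁p]) (by simp [t₂, ht₁p, ht₁f]; linarith)
      (by simpa [t₂, ht₁p]) (by simp [t₂, ht₁p]; linarith)
    exact ⟨t, h₁.trans (h₂.trans h), htp, htg, htX, htf, hfr₂.trans hfr⟩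

theorem Station.exists_gather (hS : Station C B i₀ σ L A r) (hσ : σ ∈ L) (hB : 1 ≤ B)
    {g : Fin N} (hgA : g ∈ A) (hg : g ≠ i₀) {y : ℝ} (hy : |y - σ| ≤ C / 2)
    {M : Finset (Fin N)} (hMA : M ⊆ A) (hgM : g ∉ M) {s : MaddexState N} (hv : Valid C i₀ s)
    (hr : Frame A A r s) (hgs : s.canPos g = s.pos) (hpool : |s.pos - σ| ≤ s.canFuel g)
    (hM : ∀ X ∈ M, |s.canPos X - σ| ≤ C / 2) :
    ∃ t, Reach C B i₀ s t ∧ t.pos = y ∧ t.canPos g = y ∧ (∀ X ∈ M, t.canPos X = y) ∧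
      |y - σ| ≤ t.canFuel g ∧ Frame (insert g M) A s t := by
  induction M using Finset.induction_on generalizing s with
  | empty =>
    obtain ⟨t, hst, htp, -, htg, htf, hfr⟩ := hS.exists_ferry hσ hB hv hr hgA hg hgs hpool hy
    exact ⟨t, hst, htp, htg, by simp, by linarith, hfr⟩
  | insert X M hXM ih =>
    rw [Finset.insert_subset_iff] at hMA
    have hXg : X ≠ g := fun h => hgM (h ▸ Finset.mem_insert_self X M)
    obtain ⟨t₁, h₁, ht₁p, ht₁g, ht₁M, ht₁f, hfr₁⟩ := ih hMA.2 (fun h => hgM (by simp [h])) hv hr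
      hgs hpool fun Y hY => hM Y (Finset.mem_insert_of_mem hY)
    have hXt₁ : t₁.canPos X = s.canPos X := (hfr₁ X).1 (by simp [hXg, hXM])
    obtain ⟨t, h, htp, htg, htX, htf, hfr⟩ := hS.exists_shift hσ hB hgA hMA.1 hg hXg hy
      (h₁.valid hv) (hr.trans_of_subset hfr₁ (Finset.insert_subset hgA hMA.2))
      (ht₁g.trans ht₁p.symm) (by rwa [ht₁p])
      (by rw [hXt₁]; exact hM X (Finset.mem_insert_self X M))
    refine ⟨t, h₁.trans h, htp, htg, fun Y hY => ?_, htf, ?_⟩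
    · rcases Finset.mem_insert.1 hY with rfl | hY
      · exact htX
      · have hYX : Y ≠ X := fun h => hXM (h ▸ hY)
        have hYg : Y ≠ g := fun h => hgM (by simp [← h, hY])
        rw [(hfr Y).1 (by simp [hYX, hYg]), ht₁M Y hY]
    · exact (hfr₁.mono (Finset.insert_subset_insert g (Finset.subset_insert X M)) subset_rfl).trans
        (hfr.mono (by simp [Finset.insert_subset_iff]) subset_rfl)

theorem Station.exists_park (hS : Station C B i₀ σ L A r) (hσ : σ ∈ L) (hB : 1 ≤ B)
    {g : Fin N} (hgA : g ∈ A) (hg : g ≠ i₀) {s : MaddexState N} (hv : Valid C i₀ s)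
    (hr : Frame A A r s) (hsp : s.pos = σ) (hA : ∀ i ∈ A, s.canPos i = σ) :
    ∃ t, Reach C B i₀ s t ∧ t.pos = σ + C / 2 ∧ (∀ i ∈ A, t.canPos i = σ + C / 2) ∧
      t.canFuel g = C / 2 ∧ Frame A A s t := by
  have hC2 : |σ + C / 2 - σ| = C / 2 := by
    rw [add_sub_cancel_left, abs_of_nonneg (by linarith [hv.capacity_nonneg])]
  have hgA' : insert g (A.erase g) ⊆ A := Finset.insert_subset hgA (A.erase_subset g)
  obtain ⟨t₁, h₁, ht₁p, ht₁g, ht₁A, ht₁f, hfr₁⟩ := hS.exists_gather hσ hB hgA hg hC2.le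
    (A.erase_subset g) (A.notMem_erase g) hv hr (by rw [hA g hgA, hsp])
    (by simp [hsp, hv.fuel_nonneg])
    (fun X hX => by simp [hA X (Finset.mem_of_mem_erase hX)]; linarith [hv.capacity_nonneg])
  obtain ⟨t₂, h₂, ht₂p, -, ht₂g, ht₂f, hfr₂⟩ := hS.exists_ferry hσ hB (h₁.valid hv)
    (hr.trans_of_subset hfr₁ hgA') hgA hg (ht₁g.trans ht₁p.symm) (by rwa [ht₁p]) hC2.le
  refine ⟨t₂, h₁.trans h₂, ht₂p, fun i hi => ?_, by rw [ht₂f, hC2]; ring,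
    (hfr₁.mono hgA' subset_rfl).trans (hfr₂.mono (by simpa) subset_rfl)⟩
  rcases eq_or_ne i g with rfl | hig
  · exact ht₂g
  · rw [(hfr₂ i).1 (by simpa), ht₁A i (Finset.mem_erase.2 ⟨hig, hi⟩)]

theorem Station.reach_roundTrip (hS : Station C B i₀ σ L A r) (hσ : σ ∈ L) (hB : 1 ≤ B)
    {g : Fin N} (hgA : g ∈ A) (hg : g ≠ i₀) {w : MaddexState N} (hv : Valid C i₀ w)
    (hr : Frame A A r w) (hwp : w.pos = σ + C / 2) (hwg : w.canPos g = w.pos)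
    (hpool : C / 2 ≤ w.tank + w.canFuel g)
    (hfull : ∀ i ∈ A, i ≠ g → w.canPos i ∈ L → w.canFuel i = C) :
    Reach C B i₀ w { w with tank := 1, canFuel := update w.canFuel g (C / 2) } := by
  have hC := hv.capacity_nonneg
  have hd : |w.pos - σ| = C / 2 := by rw [hwp, add_sub_cancel_left, abs_of_nonneg (by linarith)]
  convert hS.reach_ferry (y := w.pos) (τ := 1) (φ := C / 2) hσ hB hv hr hgA hg hwg
    (by linarith) zero_le_one le_rfl (by linarith) (by linarith) (by rw [hd]; ring) using 2
  · rw [← hwg, update_eq_self]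
  · ext i
    rcases eq_or_ne i g with rfl | hi
    · simp
    · simp only [update_of_ne hi, topUp]
      split_ifs with h
      · exact hfull i h.1 hi h.2
      · rfl

theorem Station.reach_pour (hS : Station C B i₀ σ L A r) (hσ : σ ∈ L) (hB : 1 ≤ B)
    {g h : Fin N} (hgA : g ∈ A) (hhA : h ∈ A) (hg : g ≠ i₀) (hh : h ≠ i₀) (hhg : h ≠ g)
    {u : MaddexState N} (hv : Valid C i₀ u) (hr : Frame A A r u) (hu : Docked C σ L A g u)
    (huh : u.canPos h = u.pos) (hhL : u.canPos h ∉ L) {a : ℝ} (ha0 : 0 ≤ a) (ha1 : a ≤ 1)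
    (haC : a ≤ C / 2) (hah : u.canFuel h + a ≤ C) :
    Reach C B i₀ u { u with canFuel := update u.canFuel h (u.canFuel h + a) } := by
  have h₁ := step_pour (C := C) (B := B) u g h a hhg.symm hg hh hu.canPos_g huh ha0 hah
    (by rw [hu.canFuel_g]; exact haC)
  refine (Relation.ReflTransGen.single h₁).trans ?_
  convert hS.reach_roundTrip hσ hB hgA hg (h₁.valid hv) ?_ (by simpa using hu.pos)
    (by simpa [update_of_ne hhg.symm] using hu.canPos_g)
    (by simp [update_of_ne hhg.symm, hu.tank, hu.canFuel_g]; linarith) ?_ using 2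
  · exact hu.tank
  · ext i
    rcases eq_or_ne i g with rfl | hig
    · simp [update_of_ne hhg.symm, hu.canFuel_g]
    · simp only [update_apply, if_neg hig]
  · exact hr.trans_of_subset (W := ∅) (fun i => ⟨fun _ => rfl, fun hi => by
      simp [update_of_ne (ne_of_mem_of_not_mem hgA hi).symm,
        update_of_ne (ne_of_mem_of_not_mem hhA hi).symm]⟩) (Finset.empty_subset _)
  · intro i hiA hig hiL
    rcases eq_or_ne i h with rfl | hih
    · exact absurd hiL hhL
    · simpa [update_apply, if_neg hig, if_neg hih] using hu.full i hiA hig hiL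

theorem Station.reach_fill (hS : Station C B i₀ σ L A r) (hσ : σ ∈ L) (hB : 1 ≤ B)
    (hC : 0 < C) {g h : Fin N} (hgA : g ∈ A) (hhA : h ∈ A) (hg : g ≠ i₀) (hh : h ≠ i₀)
    (hhg : h ≠ g) {u : MaddexState N} (hv : Valid C i₀ u) (hr : Frame A A r u)
    (hu : Docked C σ L A g u) (huh : u.canPos h = u.pos) :
    Reach C B i₀ u { u with canFuel := update u.canFuel h C } := by
  set q := min 1 (C / 2)
  have hq : 0 < q := lt_min one_pos (by linarith)
  obtain ⟨n, hn⟩ := exists_nat_ge ((C - u.canFuel h) / q)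
  rw [div_le_iff₀ hq] at hn
  induction n generalizing u with
  | zero =>
    rw [← le_antisymm (hv.fuel_le h) (by simp at hn; linarith), update_eq_self]
  | succ n ih =>
    by_cases hfh : u.canFuel h = C
    · rw [← hfh, update_eq_self]
    obtain ⟨a, ha0, haq, hah, hn'⟩ : ∃ a, 0 ≤ a ∧ a ≤ q ∧ a ≤ C - u.canFuel h ∧
        C - (u.canFuel h + a) ≤ n * q := by
      refine ⟨min q (C - u.canFuel h), le_min hq.le (by linarith [hv.fuel_le h]),
        min_le_left _ _, min_le_right _ _, ?_⟩
      rcases min_choice q (C - u.canFuel h) with h' | h' <;> rw [h'] <;> push_cast at hn <;>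
        nlinarith
    have hhL : u.canPos h ∉ L := fun hL => hfh (hu.full h hhA hhg hL)
    have h₁ := hS.reach_pour hσ hB hgA hhA hg hh hhg hv hr hu huh hhL ha0
      (haq.trans (min_le_left _ _)) (haq.trans (min_le_right _ _)) (by linarith)
    have hu₁ : Docked C σ L A g { u with canFuel := update u.canFuel h (u.canFuel h + a) } :=
      ⟨hu.pos, hu.tank, hu.canPos_g, by simp [update_of_ne hhg.symm, hu.canFuel_g],
        fun i hiA hig hiL => by
          rcases eq_or_ne i h with rfl | hih
          · exact absurd hiL hhL
          · simpa [update_of_ne hih] using hu.full i hiA hig hiL⟩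
    have h₂ := ih (h₁.valid hv) (hr.trans_of_subset (W := ∅)
      (fun i => ⟨fun _ => rfl, fun hi => update_of_ne (ne_of_mem_of_not_mem hhA hi).symm _ _⟩)
      (Finset.empty_subset _)) hu₁ huh (by simpa using hn')
    convert h₁.trans h₂ using 2
    simp

theorem Station.reach_fillAll (hS : Station C B i₀ σ L A r) (hσ : σ ∈ L) (hB : 1 ≤ B)
    (hC : 0 < C) {g : Fin N} (hgA : g ∈ A) (hg : g ≠ i₀) {M : Finset (Fin N)} (hMA : M ⊆ A)
    (hM : ∀ h ∈ M, h ≠ i₀ ∧ h ≠ g) {u : MaddexState N} (hv : Valid C i₀ u)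
    (hr : Frame A A r u) (hu : Docked C σ L A g u) (hMu : ∀ h ∈ M, u.canPos h = u.pos) :
    Reach C B i₀ u { u with canFuel := fun i => if i ∈ M then C else u.canFuel i } := by
  induction M using Finset.induction_on with
  | empty => exact .refl
  | insert h M hhM ih =>
    rw [Finset.insert_subset_iff] at hMA
    have hh := hM h (Finset.mem_insert_self h M)
    have hgM : g ∉ M := fun h' => (hM g (Finset.mem_insert_of_mem h')).2 rfl
    set u₁ : MaddexState N := { u with canFuel := fun i => if i ∈ M then C else u.canFuel i }
    have h₁ : Reach C B i₀ u u₁ := ih hMA.2 (fun h' h'M => hM h' (Finset.mem_insert_of_mem h'M))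
      (fun h' h'M => hMu h' (Finset.mem_insert_of_mem h'M))
    have hu₁ : Docked C σ L A g u₁ := ⟨hu.pos, hu.tank, hu.canPos_g,
      by simp [u₁, hgM, hu.canFuel_g], fun i hiA hig hiL => by
        by_cases hiM : i ∈ M <;> simp [u₁, hiM, hu.full i hiA hig hiL]⟩
    have h₂ := hS.reach_fill hσ hB hC hgA hMA.1 hg hh.1 hh.2 (h₁.valid hv)
      (hr.trans_of_subset (W := ∅) (fun i => ⟨fun _ => rfl, fun hi => by
        simp [u₁, show i ∉ M from fun h => hi (hMA.2 h)]⟩) (Finset.empty_subset _))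
      hu₁ (hMu h (Finset.mem_insert_self h M))
    convert h₁.trans h₂ using 2
    ext i
    by_cases hih : i = h <;> simp [u₁, hih, hhM]

/-- Every use of the lifted station leaves `g` at `σ + C/2` with exactly `C/2` fuel again, so the
cans outside `A.erase g` stay as in the fixed reference state `r'`. -/
theorem Station.lift (hS : Station C B i₀ σ L A r) (hσ : σ ∈ L) (hB : 1 ≤ B) (hC : 0 < C)
    {g : Fin N} (hgA : g ∈ A) (hg : g ≠ i₀) {r' : MaddexState N} (hr' : Frame A A r r')
    (hr'g : r'.canPos g = σ + C / 2) (hr'f : r'.canFuel g = C / 2) :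
    Station C B i₀ (σ + C / 2) (insert (σ + C / 2) L) (A.erase g) r' := by
  intro s hv hsp hfr
  have hsg : s.canPos g = s.pos := ((hfr g).1 (by simp)).trans (hr'g.trans hsp.symm)
  have hsf : s.canFuel g = C / 2 := ((hfr g).2 (by simp)).trans hr'f
  have hr : Frame A A r s := hr'.trans (hfr.mono (A.erase_subset g) (A.erase_subset g))
  have hd : |s.pos - σ| = C / 2 := by
    rw [hsp, add_sub_cancel_left, abs_of_nonneg (by linarith)]
  have h₁ := hS.reach_ferry (y := s.pos) (τ := 1) (φ := C / 2) hσ hB hv hr hgA hg hsg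
    (by linarith [hv.tank_nonneg]) zero_le_one le_rfl (by linarith) (by linarith)
    (by rw [hd]; ring)
  set M := ((A.erase g).erase i₀).filter fun i => s.canPos i = s.pos
  have h₂ := hS.reach_fillAll hσ hB hC hgA hg (M := M)
    (fun i hi => by simp [M] at hi; exact hi.1.2.2) (fun i hi => by simp [M] at hi; tauto)
    (h₁.valid hv) (hr.trans_of_subset (frame_ferry hgA _ _ _ _) (by simpa))
    ⟨hsp, rfl, by simp, by simp, fun i hiA hig hiL => by
      simp only [update_of_ne hig] at hiL ⊢; simp [topUp, hiA, hiL]⟩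
    (fun i hi => by simp [M] at hi; simp [update_of_ne hi.1.2.1, hi.2])
  convert h₁.trans h₂ using 1
  simp only [refuel, MaddexState.mk.injEq, true_and]
  refine ⟨by rw [← hsg, update_eq_self], funext fun i => ?_⟩
  have := hv.fuel_i₀
  rcases eq_or_ne i g with rfl | hig
  · simp [M, topUp, hsf]
  · simp only [update_of_ne hig, topUp, M, Finset.mem_filter, Finset.mem_erase]
    split_ifs <;> simp_all

theorem Station.exists_hop (hS : Station C B i₀ σ L A r) (hB : 1 ≤ B) {s : MaddexState N}
    (hv : Valid C i₀ s) (hr : Frame A A r s) (hsp : s.pos = σ) (hi₀ : s.canPos i₀ = σ) :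
    ∃ t, Reach C B i₀ s t ∧ t.pos = σ ∧ t.canPos i₀ = σ + 1 / 2 ∧ Frame {i₀} A s t := by
  have h₁ := hS s hv hsp hr
  have h₂ := step_carry (C := C) (i₀ := i₀) hB (refuel C L A s) i₀ (σ + 1 / 2)
    (by simp [refuel, hi₀, hsp]) (by simp [refuel, hsp]; norm_num)
  refine ⟨_, h₁.trans (.tail (.single h₂) (step_drive _ σ ?_)), rfl, by simp,
    fun i => ⟨fun hi => ?_, fun hi => ?_⟩⟩
  · simp [refuel, hsp]; norm_num
  · simp [refuel, update_of_ne (by simpa using hi : i ≠ i₀)]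
  · simp [refuel, topUp_of_notMem hi]

theorem Station.exists_deliver (hB : 1 ≤ B) (hC : 0 < C) (k : ℕ) {σ : ℝ} {L : Set ℝ}
    {A : Finset (Fin N)} {r : MaddexState N} (hS : Station C B i₀ σ L A r) (hσ : σ ∈ L)
    (hi₀ : i₀ ∈ A) (hk : (A.erase i₀).card = k) {s : MaddexState N} (hv : Valid C i₀ s)
    (hr : Frame A A r s) (hsp : s.pos = σ) (hA : ∀ i ∈ A, s.canPos i = σ) :
    ∃ t, Reach C B i₀ s t ∧ t.pos = σ ∧ t.canPos i₀ = σ + (k * C + 1) / 2 ∧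
      (∀ i ∈ A, i ≠ i₀ → t.canPos i = σ) ∧ Frame A A s t := by
  induction k generalizing σ L A r s with
  | zero =>
    obtain ⟨t, h, htp, hti₀, hfr⟩ := hS.exists_hop hB hv hr hsp (hA i₀ hi₀)
    refine ⟨t, h, htp, by simpa using hti₀, fun i hi hne => ?_, hfr.mono (by simpa) subset_rfl⟩
    exact absurd (Finset.card_pos.2 ⟨i, Finset.mem_erase.2 ⟨hne, hi⟩⟩) (by omega)
  | succ k ih =>
    obtain ⟨g, hg⟩ : (A.erase i₀).Nonempty := Finset.card_pos.1 (by omega)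
    obtain ⟨hgi₀, hgA⟩ := Finset.mem_erase.1 hg
    have hC2 : |σ + C / 2 - σ| = C / 2 := by
      rw [add_sub_cancel_left, abs_of_nonneg (by linarith)]
    have hAg : A.erase g ⊆ A := A.erase_subset g
    obtain ⟨t₁, h₁, ht₁p, ht₁A, ht₁f, hfr₁⟩ := hS.exists_park hσ hB hgA hgi₀ hv hr hsp hA
    have hr₁ := hr.trans hfr₁
    obtain ⟨t₂, h₂, ht₂p, ht₂i₀, ht₂A, hfr₂⟩ :=
      ih (hS.lift hσ hB hC hgA hgi₀ hr₁ (ht₁A g hgA) ht₁f) (mem_insert _ _)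
        (Finset.mem_erase.2 ⟨Ne.symm hgi₀, hi₀⟩)
        (by rw [Finset.erase_right_comm, Finset.card_erase_of_mem hg, hk]; rfl)
        (h₁.valid hv) (.refl _ _ _) ht₁p fun i hi => ht₁A i (hAg hi)
    have hfr₂' : Frame A A t₁ t₂ := hfr₂.mono hAg hAg
    have ht₂g : t₂.canPos g = t₂.pos := by rw [(hfr₂ g).1 (by simp), ht₁A g hgA, ht₂p]
    have ht₂f : t₂.canFuel g = C / 2 := by rw [(hfr₂ g).2 (by simp), ht₁f]
    obtain ⟨t₃, h₃, ht₃p, ht₃g, ht₃A, -, hfr₃⟩ := hS.exists_gather hσ hB hgA hgi₀ (y := σ)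
      (M := (A.erase g).erase i₀) (by simp; linarith) ((Finset.erase_subset _ _).trans hAg)
      (by simp) (h₂.valid (h₁.valid hv)) (hr₁.trans hfr₂') ht₂g (by rw [ht₂p, hC2, ht₂f])
      (fun X hX => by rw [ht₂A X (Finset.mem_of_mem_erase hX) (Finset.ne_of_mem_erase hX), hC2])
    refine ⟨t₃, h₁.trans (h₂.trans h₃), ht₃p, ?_, fun i hi hi₀ => ?_, ?_⟩
    · rw [(hfr₃ i₀).1 (by simp [hgi₀.symm]), ht₂i₀]
      push_cast
      ring
    · rcases eq_or_ne i g with rfl | hig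
      · exact ht₃g
      · exact ht₃A i (by simp [hi, hig, hi₀])
    · exact hfr₁.trans (hfr₂'.trans (hfr₃.mono (Finset.insert_subset hgA
        ((Finset.erase_subset _ _).trans hAg)) subset_rfl))

end Station

end Maddex

/-- With `N ≥ 1` cans, there is a plan whose final state has the jeep at `0`,
one distinguished can full at position `D_{N−1} = ((N−1)·C + 1)/2`, and the
other `N − 1` cans at `0`, such that the distinguished can is full in every
state of the plan (no fuel of this can is ever used). -/
theorem maddex_dump_full_can (N B : ℕ) (C : ℝ) (hC : 0 < C) (hB : 1 ≤ B)
    (hN : 1 ≤ N) :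
    ∃ (k : ℕ) (f : ℕ → MaddexState N) (i₀ : Fin N),
      f 0 = maddexInit N C ∧
      (∀ j < k, MaddexStep C B (f j) (f (j + 1))) ∧
      (f k).pos = 0 ∧
      (f k).canPos i₀ = (((N : ℝ) - 1) * C + 1) / 2 ∧
      (∀ i : Fin N, i ≠ i₀ → (f k).canPos i = 0) ∧
      (∀ j ≤ k, (f j).canFuel i₀ = C) := by
  set i₀ : Fin N := ⟨0, hN⟩
  have hv₀ : Maddex.Valid C i₀ (maddexInit N C) :=
    ⟨zero_le_one, le_rfl, fun _ => hC.le, fun _ => le_rfl, rfl⟩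
  obtain ⟨t, hreach, htp, hti₀, htA, -⟩ :=
    (Maddex.station_zero (B := B) Finset.univ (maddexInit N C)).exists_deliver hB hC (N - 1)
      (Set.mem_singleton 0) (Finset.mem_univ i₀) (by simp) hv₀ (.refl _ _ _) rfl fun _ _ => rfl
  obtain ⟨k, f, hf0, hfk, hf⟩ := exists_seq_of_reflTransGen hreach
  have hvalid : ∀ j ≤ k, Maddex.Valid C i₀ (f j) := by
    intro j
    induction j with
    | zero => exact fun _ => hf0 ▸ hv₀
    | succ j ihj => exact fun hj => (hf j hj).valid (ihj (by omega))
  refine ⟨k, f, i₀, hf0, fun j hj => (hf j hj).1, hfk ▸ htp, ?_,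
    fun i hi => hfk ▸ htA i (Finset.mem_univ i) hi, fun j hj => (hvalid j hj).fuel_i₀⟩
  rw [hfk, hti₀, Nat.cast_sub hN]
  ring
end

section
/- In the Maddex model with N ≥ 1 cans there is a plan that reaches a state in which the jeep's position is D_N = (N·C + 1)/2 and subsequently reaches a state in which the jeep's position is 0. Together with the round-trip upper bound, the solution of Maddex' round-trip jeep problem with N cans is exactly D_N. -/
namespace MaddexAux

variable {N : ℕ} {C : ℝ} {B : ℕ}

abbrev Reach (C : ℝ) (B : ℕ) : MaddexState N → MaddexState N → Prop :=
  Relation.ReflTransGen (MaddexStep C B)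

/-- Drive to `q` carrying can `i`. -/
lemma drive1 (hB : 1 ≤ B) (s : MaddexState N) (i : Fin N) (q : ℝ)
    (hi : s.canPos i = s.pos) (hf : |q - s.pos| ≤ s.tank) :
    ∃ s', Reach C B s s' ∧ s'.pos = q ∧ s'.tank = s.tank - |q - s.pos| ∧
      s'.canPos i = q ∧ (∀ j, j ≠ i → s'.canPos j = s.canPos j) ∧
      (∀ j, s'.canFuel j = s.canFuel j) := by
  have h := MaddexStep.drive (C := C) (B := B) s q {i}
    (by simpa using hB) (by simpa using hi) (by linarith)
  exact ⟨_, Relation.ReflTransGen.single h, rfl, rfl, by simp,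
    fun j hj => by simp [hj], fun j => rfl⟩

/-- Drive to `q` carrying nothing. -/
lemma drive0 (s : MaddexState N) (q : ℝ) (hf : |q - s.pos| ≤ s.tank) :
    ∃ s', Reach C B s s' ∧ s'.pos = q ∧ s'.tank = s.tank - |q - s.pos| ∧
      (∀ j, s'.canPos j = s.canPos j) ∧ (∀ j, s'.canFuel j = s.canFuel j) := by
  have h := MaddexStep.drive (C := C) (B := B) s q ∅ (by simp) (by simp) (by linarith)
  exact ⟨_, Relation.ReflTransGen.single h, rfl, rfl, fun j => by simp, fun j => rfl⟩

/-- Move an amount `a` of fuel from can `i` into the tank. -/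
lemma sip (s : MaddexState N) (i : Fin N) (a : ℝ)
    (hloc : s.canPos i = s.pos) (ha : 0 ≤ a)
    (htank : s.tank + a ≤ 1) (hcan : a ≤ s.canFuel i) :
    ∃ s', Reach C B s s' ∧ s'.pos = s.pos ∧ s'.tank = s.tank + a ∧
      (∀ j, s'.canPos j = s.canPos j) ∧ s'.canFuel i = s.canFuel i - a ∧
      (∀ j, j ≠ i → s'.canFuel j = s.canFuel j) := by
  have h := MaddexStep.canToTank (C := C) (B := B) s i a hloc ha htank (by linarith)
  exact ⟨_, Relation.ReflTransGen.single h, rfl, rfl, fun j => rfl, by simp,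
    fun j hj => by simp [Function.update_of_ne hj]⟩

/-- Move an amount `a` of fuel from can `i` into can `k`. -/
lemma pour (s : MaddexState N) (i k : Fin N) (hik : i ≠ k) (a : ℝ)
    (hi : s.canPos i = s.pos) (hk : s.canPos k = s.pos) (ha : 0 ≤ a)
    (hfull : s.canFuel k + a ≤ C) (hcan : a ≤ s.canFuel i) :
    ∃ s', Reach C B s s' ∧ s'.pos = s.pos ∧ s'.tank = s.tank ∧
      (∀ j, s'.canPos j = s.canPos j) ∧ s'.canFuel i = s.canFuel i - a ∧
      s'.canFuel k = s.canFuel k + a ∧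
      (∀ j, j ≠ i → j ≠ k → s'.canFuel j = s.canFuel j) := by
  have h := MaddexStep.canToCan (C := C) (B := B) s i k hik a hi hk ha hfull (by linarith)
  refine ⟨_, Relation.ReflTransGen.single h, rfl, rfl, fun j => rfl, ?_, by simp, ?_⟩
  · simp [Function.update_of_ne hik.symm, Function.update_of_ne hik]
  · intro j hji hjk
    simp [Function.update_of_ne hji, Function.update_of_ne hjk]

/-- At the fuel station, fill the tank and all cans located at `0`. -/
lemma refillAll (s : MaddexState N) (hp : s.pos = 0)
    (ht : s.tank ≤ 1) (hcan : ∀ j, s.canFuel j ≤ C) :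
    ∃ s', Reach C B s s' ∧ s'.pos = 0 ∧ s'.tank = 1 ∧
      (∀ j, s'.canPos j = s.canPos j) ∧
      (∀ j, s.canPos j = 0 → s'.canFuel j = C) ∧
      (∀ j, s.canPos j ≠ 0 → s'.canFuel j = s.canFuel j) := by
  have h := MaddexStep.refill (C := C) (B := B) s hp 1
    (fun j => if s.canPos j = 0 then C else s.canFuel j) ht le_rfl
    (fun j => by by_cases hj : s.canPos j = 0 <;> simp [hj, hcan j])
  exact ⟨_, Relation.ReflTransGen.single h, hp, rfl, fun j => rfl,
    fun j hj => by simp [hj], fun j hj => by simp [hj]⟩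

/-- Travel a distance `L` in direction `ε` carrying can `i`, sipping fuel from
the can into the tank as needed.  The can keeps as much fuel as possible. -/
lemma leg (hB : 1 ≤ B) :
    ∀ (n : ℕ) (s : MaddexState N) (i : Fin N) (ε L : ℝ),
    (ε = 1 ∨ ε = -1) → s.canPos i = s.pos →
    0 ≤ s.tank → s.tank ≤ 1 → 0 ≤ s.canFuel i →
    0 ≤ L → L ≤ s.tank + s.canFuel i → L ≤ n →
    ∃ s', Reach C B s s' ∧ s'.pos = s.pos + ε * L ∧
      s'.canPos i = s'.pos ∧
      s'.tank = s.tank + s.canFuel i - L - min (s.canFuel i) (s.tank + s.canFuel i - L) ∧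
      s'.canFuel i = min (s.canFuel i) (s.tank + s.canFuel i - L) ∧
      (∀ j, j ≠ i → s'.canPos j = s.canPos j ∧ s'.canFuel j = s.canFuel j) := by
  intro n
  induction n with
  | zero =>
    intro s i ε L hε hi ht0 ht1 hc0 hL0 hLw hLn
    have hL : L = 0 := le_antisymm (by exact_mod_cast hLn) hL0
    have hmin : min (s.canFuel i) (s.tank + s.canFuel i - L) = s.canFuel i :=
      min_eq_left (by linarith)
    refine ⟨s, .refl, by simp [hL], hi, ?_, ?_, fun j _ => ⟨rfl, rfl⟩⟩
    · rw [hmin]; linarith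
    · rw [hmin]
  | succ n ih =>
    intro s i ε L hε hi ht0 ht1 hc0 hL0 hLw hLn
    have habs : ∀ x : ℝ, 0 ≤ x → |ε * x| = x := by
      intro x hx; rcases hε with h | h <;> simp [h, abs_of_nonneg hx]
    by_cases hL : L ≤ s.tank
    · -- a single drive suffices
      have hq : |s.pos + ε * L - s.pos| = L := by
        rw [show s.pos + ε * L - s.pos = ε * L by ring, habs L hL0]
      obtain ⟨s', hr, hp, ht, hcp, hcpo, hcf⟩ :=
        drive1 (C := C) hB s i (s.pos + ε * L) hi (by rw [hq]; exact hL)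
      have hmin : min (s.canFuel i) (s.tank + s.canFuel i - L) = s.canFuel i :=
        min_eq_left (by linarith)
      refine ⟨s', hr, hp, by rw [hcp, hp], ?_, by rw [hcf, hmin], ?_⟩
      · rw [ht, hq, hmin]; ring
      · intro j hj; exact ⟨hcpo j hj, hcf j⟩
    · push_neg at hL
      have hLc : L - s.tank ≤ s.canFuel i := by linarith
      set a := min 1 (L - s.tank) with has
      have ha0 : 0 ≤ a := le_min zero_le_one (by linarith)
      have haLt : a ≤ L - s.tank := min_le_right _ _
      have hac : a ≤ s.canFuel i := le_trans haLt hLc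
      have ha1 : a ≤ 1 := min_le_left _ _
      have hq₁ : |s.pos + ε * s.tank - s.pos| = s.tank := by
        rw [show s.pos + ε * s.tank - s.pos = ε * s.tank by ring, habs _ ht0]
      obtain ⟨s₁, hr1, hp1, ht1', hcp1, hcpo1, hcf1⟩ :=
        drive1 (C := C) hB s i (s.pos + ε * s.tank) hi (by rw [hq₁])
      have ht1'' : s₁.tank = 0 := by rw [ht1', hq₁]; ring
      obtain ⟨s₂, hr2, hp2, ht2, hcp2, hcfi2, hcfo2⟩ :=
        sip (C := C) (B := B) s₁ i a (by rw [hcp1, hp1]) ha0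
          (by rw [ht1'']; linarith) (by rw [hcf1]; exact hac)
      have hp2' : s₂.pos = s.pos + ε * s.tank := by rw [hp2, hp1]
      have ht2' : s₂.tank = a := by rw [ht2, ht1'']; ring
      have hq₂ : |s.pos + ε * s.tank + ε * a - s₂.pos| = a := by
        rw [hp2', show s.pos + ε * s.tank + ε * a - (s.pos + ε * s.tank) = ε * a by ring,
          habs _ ha0]
      obtain ⟨s₃, hr3, hp3, ht3, hcp3, hcpo3, hcf3⟩ :=
        drive1 (C := C) hB s₂ i (s.pos + ε * s.tank + ε * a)
          (by rw [hcp2, hcp1, hp2']) (by rw [hq₂, ht2'])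
      have ht3' : s₃.tank = 0 := by rw [ht3, hq₂, ht2']; ring
      have hcf3' : s₃.canFuel i = s.canFuel i - a := by rw [hcf3, hcfi2, hcf1]
      have hcast : (L : ℝ) ≤ (n : ℝ) + 1 := by exact_mod_cast hLn
      have hLa : L - s.tank - a ≤ n := by
        rcases le_total 1 (L - s.tank) with h | h
        · rw [has, min_eq_left h]; linarith
        · rw [has, min_eq_right h]; simpa using (Nat.cast_nonneg n : (0:ℝ) ≤ n)
      obtain ⟨s', hr', hpos', hcp', htank', hfuel', hoth'⟩ :=
        ih s₃ i ε (L - s.tank - a) hε (by rw [hcp3, hp3]) (by rw [ht3'])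
          (by rw [ht3']; norm_num) (by rw [hcf3']; linarith) (by linarith)
          (by rw [ht3', hcf3']; linarith) hLa
      have hw : s₃.tank + s₃.canFuel i - (L - s.tank - a) = s.tank + s.canFuel i - L := by
        rw [ht3', hcf3']; ring
      have hminS : min (s₃.canFuel i) (s₃.tank + s₃.canFuel i - (L - s.tank - a))
          = s.tank + s.canFuel i - L := by
        rw [hw, hcf3']; exact min_eq_right (by linarith)
      have hminc : min (s.canFuel i) (s.tank + s.canFuel i - L)
          = s.tank + s.canFuel i - L := min_eq_right (by linarith)
      refine ⟨s', ((hr1.trans hr2).trans hr3).trans hr', ?_, hcp', ?_, ?_, ?_⟩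
      · rw [hpos', hp3]; ring
      · rw [htank', hminS, hw, hminc]
      · rw [hfuel', hminS, hminc]
      · intro j hj
        obtain ⟨hp', hf'⟩ := hoth' j hj
        refine ⟨?_, ?_⟩
        · rw [hp', hcpo3 j hj, hcp2 j, hcpo1 j hj]
        · rw [hf', hcf3 j, hcfo2 j hj, hcf1 j]

/-- At a station, take an amount `a` from station can `k` into the tank and the
carried can `i`, filling the tank first. -/
lemma takeAmt (s : MaddexState N) (i k : Fin N) (hik : k ≠ i) (a : ℝ)
    (hk : s.canPos k = s.pos) (hi : s.canPos i = s.pos)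
    (ha : 0 ≤ a) (har : a ≤ s.canFuel k)
    (ht0 : 0 ≤ s.tank) (ht1 : s.tank ≤ 1) (hcC : s.canFuel i ≤ C)
    (hroom : s.tank + s.canFuel i + a ≤ 1 + C) :
    ∃ s', Reach C B s s' ∧ s'.pos = s.pos ∧
      s'.tank = min 1 (s.tank + a) ∧
      s'.canFuel i = s.tank + s.canFuel i + a - min 1 (s.tank + a) ∧
      s'.canFuel k = s.canFuel k - a ∧
      (∀ j, s'.canPos j = s.canPos j) ∧
      (∀ j, j ≠ i → j ≠ k → s'.canFuel j = s.canFuel j) := by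
  set a1 := min a (1 - s.tank) with ha1s
  have h10 : 0 ≤ a1 := le_min ha (by linarith)
  have h1a : a1 ≤ a := min_le_left _ _
  have h1t : a1 ≤ 1 - s.tank := min_le_right _ _
  have hmin : s.tank + a1 = min 1 (s.tank + a) := by
    rcases le_total a (1 - s.tank) with h | h
    · rw [ha1s, min_eq_left h, min_eq_right (by linarith)]
    · rw [ha1s, min_eq_right h, min_eq_left (by linarith)]; ring
  obtain ⟨s₁, hr1, hp1, ht1', hcp1, hcfk1, hcfo1⟩ :=
    sip (C := C) (B := B) s k a1 hk h10 (by linarith) (le_trans h1a har)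
  obtain ⟨s₂, hr2, hp2, ht2, hcp2, hcfk2, hcfi2, hcfo2⟩ :=
    pour (C := C) (B := B) s₁ k i hik (a - a1)
      (by rw [hcp1, hk, hp1]) (by rw [hcp1, hi, hp1]) (by linarith)
      (by rw [hcfo1 i hik.symm]
          rcases le_total a (1 - s.tank) with h | h
          · rw [ha1s, min_eq_left h]; linarith
          · rw [ha1s, min_eq_right h]; linarith)
      (by rw [hcfk1]; linarith)
  refine ⟨s₂, hr1.trans hr2, by rw [hp2, hp1], by rw [ht2, ht1', hmin], ?_, ?_, ?_, ?_⟩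
  · rw [hcfi2, hcfo1 i hik.symm, ← hmin]; ring
  · rw [hcfk2, hcfk1]; ring
  · intro j; rw [hcp2 j, hcp1 j]
  · intro j hji hjk; rw [hcfo2 j hjk hji, hcfo1 j hjk]

/-- Outbound trip: starting at the base with a full tank and full carried can
`i`, drive past the full stations `0, …, k-1` (can `j` sits at `(j+1)·C/2`),
taking `C/2` from each, and arrive at `k·C/2` with full tank and full can. -/
lemma outLegs (hB : 1 ≤ B) (hC : 0 < C) :
    ∀ (k : ℕ) (s : MaddexState N) (i : Fin N), k ≤ (i : ℕ) →
    s.pos = 0 → s.tank = 1 → s.canPos i = 0 → s.canFuel i = C →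
    (∀ j : Fin N, (j : ℕ) < k → s.canPos j = ((j : ℕ) + 1) * (C / 2) ∧ s.canFuel j = C) →
    ∃ s', Reach C B s s' ∧ s'.pos = k * (C / 2) ∧ s'.tank = 1 ∧
      s'.canPos i = s'.pos ∧ s'.canFuel i = C ∧
      (∀ j : Fin N, (j : ℕ) < k → s'.canFuel j = C / 2) ∧
      (∀ j, j ≠ i → s'.canPos j = s.canPos j) ∧
      (∀ j : Fin N, j ≠ i → ¬((j : ℕ) < k) → s'.canFuel j = s.canFuel j) := by
  intro k
  induction k with
  | zero =>
    intro s i _ hp ht hcp hcf _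
    exact ⟨s, .refl, by rw [hp]; norm_num, ht, by rw [hcp, hp], hcf,
      fun j hj => absurd hj (Nat.not_lt_zero _), fun j _ => rfl, fun j _ _ => rfl⟩
  | succ k ih =>
    intro s i hki hp ht hcp hcf hstat
    have hkN : k < N := by have := i.isLt; omega
    set sk : Fin N := ⟨k, hkN⟩ with hsk
    have hskv : (sk : ℕ) = k := rfl
    have hski : sk ≠ i := by
      intro h; apply absurd hki; rw [← h, hskv]; omega
    obtain ⟨s₁, hr1, hp1, ht1, hcpi1, hcfi1, hstat1, hcpo1, hcfo1⟩ :=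
      ih s i (by omega) hp ht hcp hcf (fun j hj => hstat j (by omega))
    have hC2 : (0:ℝ) ≤ C / 2 := by linarith
    obtain ⟨s₂, hr2, hp2, hcpi2, ht2, hcfi2, hoth2⟩ :=
      leg (C := C) hB (Nat.ceil (C / 2)) s₁ i 1 (C / 2) (Or.inl rfl) hcpi1
        (by rw [ht1]; norm_num) (by rw [ht1]) (by rw [hcfi1]; linarith)
        hC2 (by rw [ht1, hcfi1]; linarith) (Nat.le_ceil _)
    rw [ht1, hcfi1] at ht2 hcfi2
    -- facts about the station can
    have hcpsk : s₂.canPos sk = s₂.pos := by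
      rw [(hoth2 sk hski).1, hcpo1 sk hski, (hstat sk (by omega)).1, hp2, hp1, hskv]
      push_cast; ring
    have hcfsk : s₂.canFuel sk = C := by
      rw [(hoth2 sk hski).2, hcfo1 sk hski (by omega), (hstat sk (by omega)).2]
    have hw : (1:ℝ) + C - C / 2 = 1 + C / 2 := by ring
    have hminw : min C (1 + C - C / 2) = min C (1 + C / 2) := by rw [hw]
    have ht2' : s₂.tank = 1 + C / 2 - min C (1 + C / 2) := by rw [ht2, hminw]; ring
    have hcfi2' : s₂.canFuel i = min C (1 + C / 2) := by rw [hcfi2, hminw]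
    have hmle : min C (1 + C / 2) ≤ 1 + C / 2 := min_le_right _ _
    have hmge : C / 2 ≤ min C (1 + C / 2) := le_min (by linarith) (by linarith)
    obtain ⟨s₃, hr3, hp3, ht3, hcfi3, hcfsk3, hcp3, hcfo3⟩ :=
      takeAmt (C := C) (B := B) s₂ i sk hski (C / 2) hcpsk hcpi2 hC2
        (by rw [hcfsk]; linarith) (by rw [ht2']; linarith) (by rw [ht2']; linarith)
        (by rw [hcfi2']; exact min_le_left _ _)
        (by rw [ht2', hcfi2']; linarith)
    have htank3 : s₃.tank = 1 := by
      rw [ht3, ht2']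
      have : 1 ≤ 1 + C / 2 - min C (1 + C / 2) + C / 2 := by
        have := min_le_left C (1 + C / 2); linarith
      rw [min_eq_left this]
    have hfuel3 : s₃.canFuel i = C := by
      rw [hcfi3, ht2', hcfi2']
      have : 1 ≤ 1 + C / 2 - min C (1 + C / 2) + C / 2 := by
        have := min_le_left C (1 + C / 2); linarith
      rw [min_eq_left this]; ring
    refine ⟨s₃, (hr1.trans hr2).trans hr3, ?_, htank3, ?_, hfuel3, ?_, ?_, ?_⟩
    · rw [hp3, hp2, hp1]; push_cast; ring
    · rw [hcp3 i, hcpi2, hp3]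
    · intro j hj
      rcases Nat.lt_or_ge (j : ℕ) k with h | h
      · have hji : j ≠ i := by intro he; apply absurd hki; rw [← he]; omega
        have hjsk : j ≠ sk := by intro he; rw [he, hskv] at h; omega
        rw [hcfo3 j hji hjsk, (hoth2 j hji).2, hstat1 j h]
      · have hjk : (j : ℕ) = k := by omega
        have hjsk : j = sk := Fin.ext hjk
        rw [hjsk, hcfsk3, hcfsk]; ring
    · intro j hj
      rw [hcp3 j, (hoth2 j hj).1, hcpo1 j hj]
    · intro j hj hjk
      have hjsk : j ≠ sk := by intro he; rw [he, hskv] at hjk; omega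
      rw [hcfo3 j hj hjsk, (hoth2 j hj).2, hcfo1 j hj (by omega)]

/-- Inbound trip: from `k·C/2` with carried can `i`, hop back to the base,
taking at each station `j < k` (which holds `C/2`) as much as fits. -/
lemma inLegs (hB : 1 ≤ B) (hC : 0 < C) :
    ∀ (k : ℕ) (s : MaddexState N) (i : Fin N), k ≤ (i : ℕ) →
    s.pos = k * (C / 2) → s.canPos i = s.pos →
    0 ≤ s.tank → s.tank ≤ 1 → 0 ≤ s.canFuel i → s.canFuel i ≤ C →
    (∀ j : Fin N, (j : ℕ) < k → s.canPos j = ((j : ℕ) + 1) * (C / 2) ∧ s.canFuel j = C / 2) →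
    ∃ s', Reach C B s s' ∧ s'.pos = 0 ∧ s'.canPos i = 0 ∧
      0 ≤ s'.tank ∧ s'.tank ≤ 1 ∧ 0 ≤ s'.canFuel i ∧ s'.canFuel i ≤ C ∧
      (∀ j : Fin N, (j : ℕ) < k → 0 ≤ s'.canFuel j ∧ s'.canFuel j ≤ C) ∧
      (∀ j, j ≠ i → s'.canPos j = s.canPos j) ∧
      (∀ j : Fin N, j ≠ i → ¬((j : ℕ) < k) → s'.canFuel j = s.canFuel j) := by
  intro k
  induction k with
  | zero =>
    intro s i _ hp hcp ht0 ht1 hc0 hcC _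
    have hp0 : s.pos = 0 := by rw [hp]; norm_num
    exact ⟨s, .refl, hp0, by rw [hcp, hp0], ht0, ht1, hc0, hcC,
      fun j hj => absurd hj (Nat.not_lt_zero _), fun j _ => rfl, fun j _ _ => rfl⟩
  | succ k ih =>
    intro s i hki hp hcp ht0 ht1 hc0 hcC hstat
    have hkN : k < N := by have := i.isLt; omega
    set sk : Fin N := ⟨k, hkN⟩ with hsk
    have hskv : (sk : ℕ) = k := rfl
    have hski : sk ≠ i := by
      intro h; apply absurd hki; rw [← h, hskv]; omega
    have hC2 : (0:ℝ) ≤ C / 2 := by linarith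
    set w := s.tank + s.canFuel i with hws
    have hw0 : 0 ≤ w := by rw [hws]; linarith
    have hw1 : w ≤ 1 + C := by rw [hws]; linarith
    set a := min (C / 2) (1 + C - w) with has
    have ha0 : 0 ≤ a := le_min hC2 (by linarith)
    have haC2 : a ≤ C / 2 := min_le_left _ _
    have haw : w + a ≤ 1 + C := by
      have := min_le_right (C / 2) (1 + C - w); linarith
    have hcpsk : s.canPos sk = s.pos := by
      rw [(hstat sk (by omega)).1, hp, hskv]; push_cast; ring
    have hcfsk : s.canFuel sk = C / 2 := (hstat sk (by omega)).2
    obtain ⟨s₁, hr1, hp1, ht1', hcfi1, hcfsk1, hcp1, hcfo1⟩ :=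
      takeAmt (C := C) (B := B) s i sk hski a hcpsk hcp ha0
        (by rw [hcfsk]; exact haC2) ht0 ht1 hcC (by rw [← hws]; linarith)
    have htb1 : 0 ≤ s₁.tank := by rw [ht1']; exact le_min (by norm_num) (by linarith)
    have htb1' : s₁.tank ≤ 1 := by rw [ht1']; exact min_le_left _ _
    have hwi1 : s₁.tank + s₁.canFuel i = w + a := by rw [ht1', hcfi1, hws]; ring
    have hfb1 : 0 ≤ s₁.canFuel i := by
      rw [hcfi1]
      have h1 : min 1 (s.tank + a) ≤ s.tank + a := min_le_right _ _
      linarith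
    have hfbC : s₁.canFuel i ≤ C := by
      rw [hcfi1]
      rcases le_total 1 (s.tank + a) with h | h
      · rw [min_eq_left h]; linarith
      · rw [min_eq_right h]; linarith
    have hwa2 : C / 2 ≤ w + a := by
      rcases le_total (C / 2) (1 + C - w) with h | h
      · rw [has, min_eq_left h]; linarith
      · rw [has, min_eq_right h]; linarith
    obtain ⟨s₂, hr2, hp2, hcpi2, ht2, hcfi2, hoth2⟩ :=
      leg (C := C) hB (Nat.ceil (C / 2)) s₁ i (-1) (C / 2) (Or.inr rfl)
        (by rw [hcp1 i, hcp]; exact hp1.symm) htb1 htb1' hfb1 hC2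
        (by rw [hwi1]; exact hwa2) (Nat.le_ceil _)
    have hp2' : s₂.pos = k * (C / 2) := by
      rw [hp2, hp1, hp]; push_cast; ring
    have hfb2 : 0 ≤ s₂.canFuel i := by
      rw [hcfi2]; exact le_min hfb1 (by rw [hwi1]; linarith)
    have hfb2C : s₂.canFuel i ≤ C := by
      rw [hcfi2]; exact le_trans (min_le_left _ _) hfbC
    have htb2 : 0 ≤ s₂.tank := by
      rw [ht2]
      have := min_le_right (s₁.canFuel i) (s₁.tank + s₁.canFuel i - C / 2); linarith
    have htb2' : s₂.tank ≤ 1 := by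
      rw [ht2]
      rcases le_total (s₁.canFuel i) (s₁.tank + s₁.canFuel i - C / 2) with h | h
      · rw [min_eq_left h]; linarith
      · rw [min_eq_right h]; linarith
    obtain ⟨s', hr', hpos', hcpi', htb', htb'', hfb', hfbC', hstat', hcpo', hcfo'⟩ :=
      ih s₂ i (by omega) hp2' hcpi2 htb2 htb2' hfb2 hfb2C
        (fun j hj => by
          have hji : j ≠ i := by intro he; apply absurd hki; rw [← he]; omega
          have hjsk : j ≠ sk := by intro he; rw [he, hskv] at hj; omega
          constructor
          · rw [(hoth2 j hji).1, hcp1 j, (hstat j (by omega)).1]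
          · rw [(hoth2 j hji).2, hcfo1 j hji hjsk, (hstat j (by omega)).2])
    refine ⟨s', (hr1.trans hr2).trans hr', hpos', hcpi', htb', htb'', hfb', hfbC',
      ?_, ?_, ?_⟩
    · intro j hj
      rcases Nat.lt_or_ge (j : ℕ) k with h | h
      · exact hstat' j h
      · have hjk : (j : ℕ) = k := by omega
        have hjsk : j = sk := Fin.ext hjk
        have hji : j ≠ i := by intro he; apply absurd hki; rw [← he]; omega
        rw [hcfo' j hji (by omega), (hoth2 j hji).2, hjsk, hcfsk1, hcfsk]
        constructor <;> linarith
    · intro j hj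
      rw [hcpo' j hj, (hoth2 j hj).1, hcp1 j]
    · intro j hj hjk
      have hjsk : j ≠ sk := by intro he; rw [he, hskv] at hjk; omega
      rw [hcfo' j hj (by omega), (hoth2 j hj).2, hcfo1 j hj hjsk]

/-- Refill the tank to full and can `i` (located at the base) to full. -/
lemma refillOne (s : MaddexState N) (i : Fin N) (hp : s.pos = 0)
    (hcp : s.canPos i = 0) (ht : s.tank ≤ 1) (hcan : s.canFuel i ≤ C)
    (hcanAll : ∀ j, s.canFuel j ≤ C) :
    ∃ s', Reach C B s s' ∧ s'.pos = 0 ∧ s'.tank = 1 ∧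
      (∀ j, s'.canPos j = s.canPos j) ∧ s'.canFuel i = C ∧
      (∀ j, j ≠ i → s'.canFuel j = s.canFuel j) := by
  have h := MaddexStep.refill (C := C) (B := B) s hp 1
    (Function.update s.canFuel i C) ht le_rfl
    (fun j => by
      by_cases hj : j = i
      · subst hj; simp [hcp, hcan]
      · simp [Function.update_of_ne hj, hcanAll j])
  exact ⟨_, Relation.ReflTransGen.single h, hp, rfl, fun j => rfl, by simp,
    fun j hj => by simp [Function.update_of_ne hj]⟩

/-- Restore all stations `0, …, m-1` (can `j` at `(j+1)·C/2`) to full, using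
the mule can `i`, ending back at the base. -/
lemma restore (hB : 1 ≤ B) (hC : 0 < C) :
    ∀ (m : ℕ) (s : MaddexState N) (i : Fin N), m ≤ (i : ℕ) →
    s.pos = 0 → s.canPos i = 0 →
    0 ≤ s.tank → s.tank ≤ 1 → (∀ j, 0 ≤ s.canFuel j ∧ s.canFuel j ≤ C) →
    (∀ j : Fin N, (j : ℕ) < m → s.canPos j = ((j : ℕ) + 1) * (C / 2)) →
    ∃ s', Reach C B s s' ∧ s'.pos = 0 ∧ s'.canPos i = 0 ∧
      0 ≤ s'.tank ∧ s'.tank ≤ 1 ∧ (∀ j, 0 ≤ s'.canFuel j ∧ s'.canFuel j ≤ C) ∧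
      (∀ j : Fin N, (j : ℕ) < m → s'.canFuel j = C) ∧
      (∀ j, j ≠ i → s'.canPos j = s.canPos j) ∧
      (∀ j : Fin N, j ≠ i → ¬((j : ℕ) < m) → s'.canFuel j = s.canFuel j) := by
  intro m
  induction m with
  | zero =>
    intro s i _ hp hcp ht0 ht1 hbnd _
    exact ⟨s, .refl, hp, hcp, ht0, ht1, hbnd,
      fun j hj => absurd hj (Nat.not_lt_zero _), fun j _ => rfl, fun j _ _ => rfl⟩
  | succ m ihm =>
    intro s i hmi hp hcp ht0 ht1 hbnd hstatpos
    have hmN : m < N := by have := i.isLt; omega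
    set sm : Fin N := ⟨m, hmN⟩ with hsmdef
    have hsmv : (sm : ℕ) = m := rfl
    have hsmi : sm ≠ i := by intro h; apply absurd hmi; rw [← h, hsmv]; omega
    have hC2 : (0:ℝ) ≤ C / 2 := by linarith
    -- one delivery trip plus induction on the amount still missing in can `sm`
    have fill : ∀ (K : ℕ) (s : MaddexState N),
        s.pos = 0 → s.canPos i = 0 →
        0 ≤ s.tank → s.tank ≤ 1 → (∀ j, 0 ≤ s.canFuel j ∧ s.canFuel j ≤ C) →
        (∀ j : Fin N, (j : ℕ) < m + 1 → s.canPos j = ((j : ℕ) + 1) * (C / 2)) →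
        C - s.canFuel sm ≤ K →
        ∃ s', Reach C B s s' ∧ s'.pos = 0 ∧ s'.canPos i = 0 ∧
          0 ≤ s'.tank ∧ s'.tank ≤ 1 ∧ (∀ j, 0 ≤ s'.canFuel j ∧ s'.canFuel j ≤ C) ∧
          (∀ j : Fin N, (j : ℕ) < m + 1 → s'.canFuel j = C) ∧
          (∀ j, j ≠ i → s'.canPos j = s.canPos j) ∧
          (∀ j : Fin N, j ≠ i → ¬((j : ℕ) < m + 1) → s'.canFuel j = s.canFuel j) := by
      intro K
      induction K with
      | zero =>
        intro s hp hcp ht0 ht1 hbnd hstatpos hK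
        have hK' : C - s.canFuel sm ≤ 0 := by exact_mod_cast hK
        have hfm : s.canFuel sm = C := le_antisymm (hbnd sm).2 (by linarith)
        obtain ⟨s', hr, hp', hcp', ht0', ht1', hbnd', hfull', hcpo', hcfo'⟩ :=
          ihm s i (by omega) hp hcp ht0 ht1 hbnd (fun j hj => hstatpos j (by omega))
        refine ⟨s', hr, hp', hcp', ht0', ht1', hbnd', ?_, hcpo', ?_⟩
        · intro j hj
          rcases Nat.lt_or_ge (j : ℕ) m with h | h
          · exact hfull' j h
          · have : j = sm := Fin.ext (by omega)
            rw [this, hcfo' sm hsmi (by omega), hfm]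
        · intro j hj hjm; exact hcfo' j hj (by omega)
      | succ K ihK =>
        intro s hp hcp ht0 ht1 hbnd hstatpos hK
        -- restore the stations below `m`
        obtain ⟨s₁, hr1, hp1, hcp1, ht01, ht11, hbnd1, hfull1, hcpo1, hcfo1⟩ :=
          ihm s i (by omega) hp hcp ht0 ht1 hbnd (fun j hj => hstatpos j (by omega))
        have hfm1 : s₁.canFuel sm = s.canFuel sm := hcfo1 sm hsmi (by omega)
        -- refill tank and mule
        obtain ⟨s₂, hr2, hp2, ht2, hcp2, hcfi2, hcfo2⟩ :=
          refillOne (C := C) (B := B) s₁ i hp1 hcp1 ht11 (hbnd1 i).2 (fun j => (hbnd1 j).2)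
        -- outbound
        obtain ⟨s₃, hr3, hp3, ht3, hcpi3, hcfi3, hstat3, hcpo3, hcfo3⟩ :=
          outLegs hB hC m s₂ i (by omega) hp2 ht2 (by rw [hcp2 i, hcp1]) hcfi2
            (fun j hj => ⟨by rw [hcp2 j, hcpo1 j (by intro h; apply absurd hmi; rw [← h]; omega),
                hstatpos j (by omega)],
              by rw [hcfo2 j (by intro h; apply absurd hmi; rw [← h]; omega), hfull1 j hj]⟩)
        -- leg out to the station being filled
        obtain ⟨s₄, hr4, hp4, hcpi4, ht4, hcfi4, hoth4⟩ :=
          leg (C := C) hB (Nat.ceil (C / 2)) s₃ i 1 (C / 2) (Or.inl rfl) hcpi3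
            (by rw [ht3]; norm_num) (by rw [ht3]) (by rw [hcfi3]; linarith)
            hC2 (by rw [ht3, hcfi3]; linarith) (Nat.le_ceil _)
        rw [ht3, hcfi3] at ht4 hcfi4
        have hw : (1:ℝ) + C - C / 2 = 1 + C / 2 := by ring
        have ht4' : s₄.tank = 1 + C / 2 - min C (1 + C / 2) := by rw [ht4, hw]
        have hcfi4' : s₄.canFuel i = min C (1 + C / 2) := by rw [hcfi4, hw]
        have hmge : C / 2 ≤ min C (1 + C / 2) := le_min (by linarith) (by linarith)
        have hmle : min C (1 + C / 2) ≤ 1 + C / 2 := min_le_right _ _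
        have hp4' : s₄.pos = ((m : ℝ) + 1) * (C / 2) := by rw [hp4, hp3]; ring
        -- the amount delivered
        set f := s.canFuel sm with hfdef
        have hf0 : 0 ≤ f := (hbnd sm).1
        have hfC : f ≤ C := (hbnd sm).2
        set δ := min 1 (C - f) with hδdef
        have hδ0 : 0 ≤ δ := le_min zero_le_one (by linarith)
        have hδ1 : δ ≤ 1 := min_le_left _ _
        have hδf : δ ≤ C - f := min_le_right _ _
        have hδi : δ ≤ min C (1 + C / 2) := le_min (by linarith) (by linarith)
        have hcpsm4 : s₄.canPos sm = s₄.pos := by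
          rw [(hoth4 sm hsmi).1, hcpo3 sm hsmi, hcp2 sm, hcpo1 sm hsmi,
            hstatpos sm (by omega), hp4', hsmv]
        have hcfsm4 : s₄.canFuel sm = f := by
          rw [(hoth4 sm hsmi).2, hcfo3 sm hsmi (by omega), hcfo2 sm hsmi, hfm1]
        obtain ⟨s₅, hr5, hp5, ht5, hcp5, hcfi5, hcfsm5, hcfo5⟩ :=
          pour (C := C) (B := B) s₄ i sm (by exact fun h => hsmi h.symm) δ
            hcpi4 hcpsm4 hδ0 (by rw [hcfsm4]; linarith) (by rw [hcfi4']; exact hδi)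
        -- leg back to node m
        have ht5' : s₅.tank = 1 + C / 2 - min C (1 + C / 2) := by rw [ht5, ht4']
        have hcfi5' : s₅.canFuel i = min C (1 + C / 2) - δ := by rw [hcfi5, hcfi4']
        obtain ⟨s₆, hr6, hp6, hcpi6, ht6, hcfi6, hoth6⟩ :=
          leg (C := C) hB (Nat.ceil (C / 2)) s₅ i (-1) (C / 2) (Or.inr rfl)
            (by rw [hcp5 i, hcpi4, hp5]) (by rw [ht5']; linarith)
            (by rw [ht5']; linarith) (by rw [hcfi5']; linarith) hC2
            (by rw [ht5', hcfi5']; linarith) (Nat.le_ceil _)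
        have hw6 : s₅.tank + s₅.canFuel i - C / 2 = 1 - δ := by
          rw [ht5', hcfi5']; ring
        have hp6' : s₆.pos = (m : ℝ) * (C / 2) := by rw [hp6, hp5, hp4']; ring
        have ht60 : 0 ≤ s₆.tank := by
          rw [ht6]
          have := min_le_right (s₅.canFuel i) (s₅.tank + s₅.canFuel i - C / 2)
          linarith
        have ht61 : s₆.tank ≤ 1 := by
          rw [ht6]
          rcases le_total (s₅.canFuel i) (s₅.tank + s₅.canFuel i - C / 2) with h | h
          · rw [min_eq_left h, ht5']; linarith
          · rw [min_eq_right h]; linarith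
        have hcf60 : 0 ≤ s₆.canFuel i := by
          rw [hcfi6]
          refine le_min (by rw [hcfi5']; linarith) (by rw [hw6]; linarith)
        have hcf6C : s₆.canFuel i ≤ C := by
          rw [hcfi6]
          refine le_trans (min_le_left _ _) ?_
          rw [hcfi5']
          have := min_le_left C (1 + C / 2)
          linarith
        -- inbound
        obtain ⟨s₇, hr7, hp7, hcpi7, ht07, ht17, hcf07, hcfC7, hstat7, hcpo7, hcfo7⟩ :=
          inLegs hB hC m s₆ i (by omega) hp6' hcpi6 ht60 ht61 hcf60 hcf6C
            (fun j hj => by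
              have hji : j ≠ i := by intro h; apply absurd hmi; rw [← h]; omega
              have hjsm : j ≠ sm := by intro h; rw [h, hsmv] at hj; omega
              constructor
              · rw [(hoth6 j hji).1, hcp5 j, (hoth4 j hji).1, hcpo3 j hji, hcp2 j,
                  hcpo1 j hji, hstatpos j (by omega)]
              · rw [(hoth6 j hji).2, hcfo5 j hji hjsm, (hoth4 j hji).2, hstat3 j hj])
        have hcfsm7 : s₇.canFuel sm = f + δ := by
          rw [hcfo7 sm hsmi (by omega), (hoth6 sm hsmi).2, hcfsm5, hcfsm4]
        -- recurse
        obtain ⟨s₈, hr8, hp8, hcp8, ht08, ht18, hbnd8, hfull8, hcpo8, hcfo8⟩ :=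
          ihK s₇ hp7 hcpi7 ht07 ht17
            (fun j => by
              by_cases hji : j = i
              · subst hji; exact ⟨hcf07, hcfC7⟩
              · rcases Nat.lt_or_ge (j : ℕ) m with h | h
                · exact hstat7 j h
                · by_cases hjsm : j = sm
                  · rw [hjsm, hcfsm7]; constructor <;> linarith
                  · rw [hcfo7 j hji (by
                      intro hh
                      exact hjsm (Fin.ext (by omega))), (hoth6 j hji).2,
                      hcfo5 j hji hjsm, (hoth4 j hji).2,
                      hcfo3 j hji (by omega), hcfo2 j hji, hcfo1 j hji (by omega)]
                    exact hbnd j)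
            (fun j hj => by
              rw [hcpo7 j (by intro h; apply absurd hmi; rw [← h]; omega),
                (hoth6 j (by intro h; apply absurd hmi; rw [← h]; omega)).1, hcp5 j,
                (hoth4 j (by intro h; apply absurd hmi; rw [← h]; omega)).1,
                hcpo3 j (by intro h; apply absurd hmi; rw [← h]; omega), hcp2 j,
                hcpo1 j (by intro h; apply absurd hmi; rw [← h]; omega),
                hstatpos j hj])
            (by
              have hK' : C - f ≤ (K : ℝ) + 1 := by exact_mod_cast hK
              have hKc : ((K : ℕ) : ℝ) ≥ 0 := Nat.cast_nonneg _
              rw [hcfsm7]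
              rcases le_total 1 (C - f) with h | h
              · rw [hδdef, min_eq_left h]; linarith
              · rw [hδdef, min_eq_right h]; linarith)
        refine ⟨s₈, ((((((hr1.trans hr2).trans hr3).trans hr4).trans hr5).trans hr6).trans
          hr7).trans hr8, hp8, hcp8, ht08, ht18, hbnd8, hfull8, ?_, ?_⟩
        · intro j hj
          rw [hcpo8 j hj, hcpo7 j hj, (hoth6 j hj).1, hcp5 j, (hoth4 j hj).1,
            hcpo3 j hj, hcp2 j, hcpo1 j hj]
        · intro j hj hjm
          have hjsm : j ≠ sm := by intro h; rw [h, hsmv] at hjm; omega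
          rw [hcfo8 j hj hjm, hcfo7 j hj (by omega), (hoth6 j hj).2,
            hcfo5 j hj hjsm, (hoth4 j hj).2, hcfo3 j hj (by omega),
            hcfo2 j hj, hcfo1 j hj (by omega)]
    -- apply `fill` with enough iterations
    exact fill (Nat.ceil C) s hp hcp ht0 ht1 hbnd hstatpos
      (by have := (hbnd sm).1; have := Nat.le_ceil C; linarith)

/-- Waste the fuel of can `i` (and the tank) by driving back and forth. -/
lemma burn :
    ∀ (K : ℕ) (s : MaddexState N) (i : Fin N),
    s.canPos i = s.pos → 0 ≤ s.tank → s.tank ≤ 1 →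
    0 ≤ s.canFuel i → s.canFuel i ≤ K →
    ∃ s', Reach C B s s' ∧ s'.pos = s.pos ∧ 0 ≤ s'.tank ∧ s'.tank ≤ 1 ∧
      s'.canFuel i = 0 ∧ (∀ j, s'.canPos j = s.canPos j) ∧
      (∀ j, j ≠ i → s'.canFuel j = s.canFuel j) := by
  intro K
  induction K with
  | zero =>
    intro s i hcp ht0 ht1 hc0 hcK
    have : s.canFuel i = 0 := le_antisymm (by exact_mod_cast hcK) hc0
    exact ⟨s, .refl, rfl, ht0, ht1, this, fun j => rfl, fun j _ => rfl⟩
  | succ K ih =>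
    intro s i hcp ht0 ht1 hc0 hcK
    have habs1 : |s.pos - s.tank / 2 - s.pos| = s.tank / 2 := by
      rw [show s.pos - s.tank / 2 - s.pos = -(s.tank / 2) by ring, abs_neg,
        abs_of_nonneg (by linarith)]
    obtain ⟨s₁, hr1, hp1, ht1', hcp1, hcf1⟩ :=
      drive0 (C := C) (B := B) s (s.pos - s.tank / 2) (by rw [habs1]; linarith)
    rw [habs1] at ht1'
    have habs2 : |s.pos - s₁.pos| = s.tank / 2 := by
      rw [hp1, show s.pos - (s.pos - s.tank / 2) = s.tank / 2 by ring,
        abs_of_nonneg (by linarith)]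
    obtain ⟨s₂, hr2, hp2, ht2, hcp2, hcf2⟩ :=
      drive0 (C := C) (B := B) s₁ s.pos (by rw [habs2, ht1']; linarith)
    rw [habs2, ht1'] at ht2
    have ht2' : s₂.tank = 0 := by rw [ht2]; ring
    set a := min 1 (s.canFuel i) with hadef
    have ha0 : 0 ≤ a := le_min zero_le_one hc0
    have ha1 : a ≤ 1 := min_le_left _ _
    have hac : a ≤ s.canFuel i := min_le_right _ _
    obtain ⟨s₃, hr3, hp3, ht3, hcp3, hcfi3, hcfo3⟩ :=
      sip (C := C) (B := B) s₂ i a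
        (by rw [hcp2 i, hcp1 i, hcp, hp2]) ha0 (by rw [ht2']; linarith)
        (by rw [hcf2 i, hcf1 i]; exact hac)
    rw [hcf2 i, hcf1 i] at hcfi3
    have hcK1 : s.canFuel i ≤ (K : ℝ) + 1 := by exact_mod_cast hcK
    have hfl : s₃.canFuel i ≤ K := by
      rw [hcfi3]
      rcases le_total 1 (s.canFuel i) with h | h
      · rw [hadef, min_eq_left h]; linarith
      · rw [hadef, min_eq_right h]; simp
    obtain ⟨s', hr', hp', ht0', ht1'', hcf', hcpo', hcfo'⟩ :=
      ih s₃ i (by rw [hcp3 i, hcp2 i, hcp1 i, hcp, hp3, hp2])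
        (by rw [ht3, ht2']; linarith) (by rw [ht3, ht2']; linarith)
        (by rw [hcfi3]; linarith) hfl
    refine ⟨s', ((hr1.trans hr2).trans hr3).trans hr', ?_, ht0', ht1'', hcf', ?_, ?_⟩
    · rw [hp', hp3, hp2]
    · intro j; rw [hcpo' j, hcp3 j, hcp2 j, hcp1 j]
    · intro j hj; rw [hcfo' j hj, hcfo3 j hj, hcf2 j, hcf1 j]

/-- One escort trip: go out to can `mc` (empty, sitting at `g·C/2 + e`), push
it forward by `δ`, and return to the base. -/
lemma escortTrip (hB : 1 ≤ B) (hC : 0 < C) (g : ℕ) (e δ : ℝ)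
    (s : MaddexState N) (i mc : Fin N) (hmci : mc ≠ i)
    (hgi : g ≤ (i : ℕ)) (hgmc : g ≤ (mc : ℕ))
    (he0 : 0 ≤ e) (hδ0 : 0 ≤ δ) (hδ4 : δ ≤ 1/4) (heδ : e + δ ≤ C / 2)
    (hp : s.pos = 0) (hcpi : s.canPos i = 0)
    (hcpmc : s.canPos mc = g * (C / 2) + e) (hcfmc : s.canFuel mc = 0)
    (ht0 : 0 ≤ s.tank) (ht1 : s.tank ≤ 1)
    (hbnd : ∀ j, 0 ≤ s.canFuel j ∧ s.canFuel j ≤ C)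
    (hstat : ∀ j : Fin N, (j : ℕ) < g →
      s.canPos j = ((j : ℕ) + 1) * (C / 2) ∧ s.canFuel j = C) :
    ∃ s', Reach C B s s' ∧ s'.pos = 0 ∧ s'.canPos i = 0 ∧
      0 ≤ s'.tank ∧ s'.tank ≤ 1 ∧
      s'.canPos mc = g * (C / 2) + (e + δ) ∧ s'.canFuel mc = 0 ∧
      (∀ j, j ≠ i → j ≠ mc → s'.canPos j = s.canPos j) ∧
      (∀ j, 0 ≤ s'.canFuel j ∧ s'.canFuel j ≤ C) ∧
      (∀ j : Fin N, j ≠ i → j ≠ mc → ¬((j : ℕ) < g) → s'.canFuel j = s.canFuel j) := by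
  have himc : i ≠ mc := Ne.symm hmci
  have heC : e ≤ C / 2 := by linarith
  obtain ⟨s₁, hr1, hp1, ht1', hcp1, hcfi1, hcfo1⟩ :=
    refillOne (C := C) (B := B) s i hp hcpi ht1 (hbnd i).2 (fun j => (hbnd j).2)
  obtain ⟨s₂, hr2, hp2, ht2, hcpi2, hcfi2, hstat2, hcpo2, hcfo2⟩ :=
    outLegs hB hC g s₁ i hgi hp1 ht1' (by rw [hcp1 i, hcpi]) hcfi1
      (fun j hj => by
        have hji : j ≠ i := by intro h; apply absurd hgi; rw [← h]; omega
        exact ⟨by rw [hcp1 j, (hstat j hj).1],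
          by rw [hcfo1 j hji, (hstat j hj).2]⟩)
  -- leg out to the can
  obtain ⟨s₃, hr3, hp3, hcpi3, ht3, hcfi3, hoth3⟩ :=
    leg (C := C) hB (Nat.ceil C) s₂ i 1 e (Or.inl rfl) hcpi2
      (by rw [ht2]; norm_num) (by rw [ht2]) (by rw [hcfi2]; linarith) he0
      (by rw [ht2, hcfi2]; linarith) (le_trans (by linarith) (Nat.le_ceil C))
  rw [ht2, hcfi2] at ht3 hcfi3
  have hmine : C - e ≤ min C (1 + C - e) := le_min (by linarith) (by linarith)
  have hmine' : min C (1 + C - e) ≤ C := min_le_left _ _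
  have ht3' : 0 ≤ s₃.tank := by
    rw [ht3]; have := min_le_right C (1 + C - e); linarith
  have ht3'' : s₃.tank ≤ 1 := by rw [ht3]; linarith
  -- top up the tank from the mule
  set b := 1 - s₃.tank with hbdef
  have hb0 : 0 ≤ b := by rw [hbdef]; linarith
  have hbc : b ≤ s₃.canFuel i := by rw [hbdef, hcfi3, ht3]; linarith
  obtain ⟨s₄, hr4, hp4, ht4, hcp4, hcfi4, hcfo4⟩ :=
    sip (C := C) (B := B) s₃ i b hcpi3 hb0 (by rw [hbdef]; linarith) hbc
  have ht4' : s₄.tank = 1 := by rw [ht4, hbdef]; ring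
  have hcfi4' : s₄.canFuel i = C - e := by rw [hcfi4, hcfi3, hbdef, ht3]; ring
  have hp4' : s₄.pos = g * (C / 2) + e := by rw [hp4, hp3, hp2]; ring
  -- push the can forward
  have hcpmc4 : s₄.canPos mc = s₄.pos := by
    rw [hcp4 mc, (hoth3 mc hmci).1, hcpo2 mc hmci, hcp1 mc, hcpmc, hp4']
  have habs5 : |s₄.pos + δ - s₄.pos| = δ := by
    rw [show s₄.pos + δ - s₄.pos = δ by ring, abs_of_nonneg hδ0]
  obtain ⟨s₅, hr5, hp5, ht5, hcpmc5, hcpo5, hcf5⟩ :=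
    drive1 (C := C) hB s₄ mc (s₄.pos + δ) hcpmc4 (by rw [habs5, ht4']; linarith)
  rw [habs5, ht4'] at ht5
  have habs6 : |s₄.pos - s₅.pos| = δ := by
    rw [hp5, show s₄.pos - (s₄.pos + δ) = -δ by ring, abs_neg, abs_of_nonneg hδ0]
  obtain ⟨s₆, hr6, hp6, ht6, hcp6, hcf6⟩ :=
    drive0 (C := C) (B := B) s₅ s₄.pos (by rw [habs6, ht5]; linarith)
  rw [habs6, ht5] at ht6
  have ht6' : s₆.tank = 1 - 2 * δ := by rw [ht6]; ring
  have hcpi6 : s₆.canPos i = s₆.pos := by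
    rw [hcp6 i, hcpo5 i himc, hcp4 i, hcpi3, hp6, hp4]
  have hcfi6 : s₆.canFuel i = C - e := by
    rw [hcf6 i, hcf5 i, hcfi4']
  -- leg back to node g
  obtain ⟨s₇, hr7, hp7, hcpi7, ht7, hcfi7, hoth7⟩ :=
    leg (C := C) hB (Nat.ceil C) s₆ i (-1) e (Or.inr rfl) hcpi6
      (by rw [ht6']; linarith) (by rw [ht6']; linarith)
      (by rw [hcfi6]; linarith) he0
      (by rw [ht6', hcfi6]; linarith) (le_trans (by linarith) (Nat.le_ceil C))
  rw [ht6', hcfi6] at ht7 hcfi7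
  have hw : 1 - 2 * δ + (C - e) - e = 1 + C - 2 * e - 2 * δ := by ring
  rw [hw] at ht7 hcfi7
  have hw0 : (0:ℝ) ≤ 1 + C - 2 * e - 2 * δ := by linarith
  have hp7' : s₇.pos = (g : ℝ) * (C / 2) := by rw [hp7, hp6, hp4']; ring
  have hcf70 : 0 ≤ s₇.canFuel i := by
    rw [hcfi7]; exact le_min (by linarith) hw0
  have hcf7C : s₇.canFuel i ≤ C := by
    rw [hcfi7]; exact le_trans (min_le_left _ _) (by linarith)
  have ht70 : 0 ≤ s₇.tank := by
    rw [ht7]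
    have := min_le_right (C - e) (1 + C - 2 * e - 2 * δ); linarith
  have ht71 : s₇.tank ≤ 1 := by
    rw [ht7]
    rcases le_total (C - e) (1 + C - 2 * e - 2 * δ) with h | h
    · rw [min_eq_left h]; linarith
    · rw [min_eq_right h]; linarith
  -- inbound
  obtain ⟨s₈, hr8, hp8, hcpi8, ht08, ht18, hcf08, hcfC8, hstat8, hcpo8, hcfo8⟩ :=
    inLegs hB hC g s₇ i hgi hp7' hcpi7 ht70 ht71 hcf70 hcf7C
      (fun j hj => by
        have hji : j ≠ i := by intro h; apply absurd hgi; rw [← h]; omega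
        have hjmc : j ≠ mc := by intro h; apply absurd hgmc; rw [← h]; omega
        constructor
        · rw [(hoth7 j hji).1, hcp6 j, hcpo5 j hjmc, hcp4 j, (hoth3 j hji).1,
            hcpo2 j hji, hcp1 j, (hstat j hj).1]
        · rw [(hoth7 j hji).2, hcf6 j, hcf5 j, hcfo4 j hji, (hoth3 j hji).2,
            hstat2 j hj])
  have hreach : Reach C B s s₈ :=
    ((((((hr1.trans hr2).trans hr3).trans hr4).trans hr5).trans hr6).trans hr7).trans hr8
  have hcpmc8 : s₈.canPos mc = g * (C / 2) + (e + δ) := by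
    rw [hcpo8 mc hmci, (hoth7 mc hmci).1, hcp6 mc, hcpmc5, hp4']; ring
  have hcfmc8 : s₈.canFuel mc = 0 := by
    rw [hcfo8 mc hmci (by omega), (hoth7 mc hmci).2, hcf6 mc, hcf5 mc,
      hcfo4 mc hmci, (hoth3 mc hmci).2, hcfo2 mc hmci (by omega), hcfo1 mc hmci,
      hcfmc]
  refine ⟨s₈, hreach, hp8, hcpi8, ht08, ht18, hcpmc8, hcfmc8, ?_, ?_, ?_⟩
  · intro j hji hjmc
    rw [hcpo8 j hji, (hoth7 j hji).1, hcp6 j, hcpo5 j hjmc, hcp4 j,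
      (hoth3 j hji).1, hcpo2 j hji, hcp1 j]
  · intro j
    by_cases hji : j = i
    · subst hji; exact ⟨hcf08, hcfC8⟩
    · by_cases hjmc : j = mc
      · subst hjmc; rw [hcfmc8]; exact ⟨le_rfl, by linarith⟩
      · rcases Nat.lt_or_ge (j : ℕ) g with h | h
        · exact hstat8 j h
        · rw [hcfo8 j hji (by omega), (hoth7 j hji).2, hcf6 j, hcf5 j,
            hcfo4 j hji, (hoth3 j hji).2, hcfo2 j hji (by omega), hcfo1 j hji]
          exact hbnd j
  · intro j hji hjmc hjg
    rw [hcfo8 j hji (by omega), (hoth7 j hji).2, hcf6 j, hcf5 j,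
      hcfo4 j hji, (hoth3 j hji).2, hcfo2 j hji (by omega), hcfo1 j hji]

/-- Move can `mc` (empty) from `g·C/2 + e` to `(g+1)·C/2` by repeated escort
trips, restoring the stations before each trip. -/
lemma segTrips (hB : 1 ≤ B) (hC : 0 < C) (m g : ℕ) (hgm : g ≤ m)
    (i mc : Fin N) (hmci : mc ≠ i) (hmi : m ≤ (i : ℕ)) (hmmc : m ≤ (mc : ℕ)) :
    ∀ (K : ℕ) (e : ℝ) (s : MaddexState N),
    0 ≤ e → e ≤ C / 2 → C / 2 - e ≤ K * (1/4) →
    s.pos = 0 → s.canPos i = 0 →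
    s.canPos mc = g * (C / 2) + e → s.canFuel mc = 0 →
    0 ≤ s.tank → s.tank ≤ 1 → (∀ j, 0 ≤ s.canFuel j ∧ s.canFuel j ≤ C) →
    (∀ j : Fin N, (j : ℕ) < m → s.canPos j = ((j : ℕ) + 1) * (C / 2)) →
    ∃ s', Reach C B s s' ∧ s'.pos = 0 ∧ s'.canPos i = 0 ∧
      0 ≤ s'.tank ∧ s'.tank ≤ 1 ∧
      s'.canPos mc = ((g : ℝ) + 1) * (C / 2) ∧ s'.canFuel mc = 0 ∧
      (∀ j, j ≠ i → j ≠ mc → s'.canPos j = s.canPos j) ∧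
      (∀ j, 0 ≤ s'.canFuel j ∧ s'.canFuel j ≤ C) ∧
      (∀ j : Fin N, j ≠ i → j ≠ mc → ¬((j : ℕ) < m) → s'.canFuel j = s.canFuel j) := by
  intro K
  induction K with
  | zero =>
    intro e s he0 heC hK hp hcpi hcpmc hcfmc ht0 ht1 hbnd hstat
    have he : e = C / 2 := by
      have : (0:ℝ) * (1/4) = 0 := by norm_num
      have h0 : C / 2 - e ≤ 0 := by
        have := hK; push_cast at this; linarith
      linarith
    exact ⟨s, .refl, hp, hcpi, ht0, ht1, by rw [hcpmc, he]; ring, hcfmc,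
      fun j _ _ => rfl, hbnd, fun j _ _ _ => rfl⟩
  | succ K ih =>
    intro e s he0 heC hK hp hcpi hcpmc hcfmc ht0 ht1 hbnd hstat
    set δ := min (1/4 : ℝ) (C / 2 - e) with hδdef
    have hδ0 : 0 ≤ δ := le_min (by norm_num) (by linarith)
    have hδ4 : δ ≤ 1/4 := min_le_left _ _
    have hδe : δ ≤ C / 2 - e := min_le_right _ _
    -- restore all stations below m
    obtain ⟨s₁, hr1, hp1, hcpi1, ht01, ht11, hbnd1, hfull1, hcpo1, hcfo1⟩ :=
      restore hB hC m s i hmi hp hcpi ht0 ht1 hbnd hstat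
    have hji' : ∀ j : Fin N, (j : ℕ) < m → j ≠ i := by
      intro j hj h; apply absurd hmi; rw [← h]; omega
    have hjmc' : ∀ j : Fin N, (j : ℕ) < m → j ≠ mc := by
      intro j hj h; apply absurd hmmc; rw [← h]; omega
    -- one escort trip
    obtain ⟨s₂, hr2, hp2, hcpi2, ht02, ht12, hcpmc2, hcfmc2, hcpo2, hbnd2, hcfo2⟩ :=
      escortTrip hB hC g e δ s₁ i mc hmci (le_trans hgm hmi) (le_trans hgm hmmc)
        he0 hδ0 hδ4 (by linarith) hp1 hcpi1
        (by rw [hcpo1 mc hmci, hcpmc]) (by rw [hcfo1 mc hmci (by omega), hcfmc])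
        ht01 ht11 hbnd1
        (fun j hj => ⟨by rw [hcpo1 j (hji' j (by omega)), hstat j (by omega)],
          hfull1 j (by omega)⟩)
    -- recurse
    obtain ⟨s₃, hr3, hp3, hcpi3, ht03, ht13, hcpmc3, hcfmc3, hcpo3, hbnd3, hcfo3⟩ :=
      ih (e + δ) s₂ (by linarith) (by linarith)
        (by
          push_cast
          rcases le_total (1/4 : ℝ) (C / 2 - e) with h | h
          · have : δ = 1/4 := by rw [hδdef, min_eq_left h]
            rw [this]
            have hKc : C / 2 - e ≤ ((K:ℝ) + 1) * (1/4) := by push_cast at hK; linarith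
            linarith
          · have : δ = C / 2 - e := by rw [hδdef, min_eq_right h]
            rw [this]
            have : (0:ℝ) ≤ (K:ℝ) * (1/4) := by positivity
            linarith)
        hp2 hcpi2 (by rw [hcpmc2]) hcfmc2 ht02 ht12 hbnd2
        (fun j hj => by
          rw [hcpo2 j (hji' j hj) (hjmc' j hj), hcpo1 j (hji' j hj), hstat j hj])
    refine ⟨s₃, (hr1.trans hr2).trans hr3, hp3, hcpi3, ht03, ht13, hcpmc3, hcfmc3,
      ?_, hbnd3, ?_⟩
    · intro j hji hjmc
      rw [hcpo3 j hji hjmc, hcpo2 j hji hjmc, hcpo1 j hji]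
    · intro j hji hjmc hjm
      rw [hcfo3 j hji hjmc hjm, hcfo2 j hji hjmc (by omega),
        hcfo1 j hji (by omega)]

/-- Move can `mc` (empty) from node `g` all the way out to node `m+1`. -/
lemma transport (hB : 1 ≤ B) (hC : 0 < C) (m : ℕ)
    (i mc : Fin N) (hmci : mc ≠ i) (hmi : m ≤ (i : ℕ)) (hmmc : m ≤ (mc : ℕ)) :
    ∀ (d g : ℕ), g + d = m + 1 → ∀ s : MaddexState N,
    s.pos = 0 → s.canPos i = 0 →
    s.canPos mc = (g : ℝ) * (C / 2) → s.canFuel mc = 0 →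
    0 ≤ s.tank → s.tank ≤ 1 → (∀ j, 0 ≤ s.canFuel j ∧ s.canFuel j ≤ C) →
    (∀ j : Fin N, (j : ℕ) < m → s.canPos j = ((j : ℕ) + 1) * (C / 2)) →
    ∃ s', Reach C B s s' ∧ s'.pos = 0 ∧ s'.canPos i = 0 ∧
      0 ≤ s'.tank ∧ s'.tank ≤ 1 ∧
      s'.canPos mc = ((m : ℝ) + 1) * (C / 2) ∧ s'.canFuel mc = 0 ∧
      (∀ j, j ≠ i → j ≠ mc → s'.canPos j = s.canPos j) ∧
      (∀ j, 0 ≤ s'.canFuel j ∧ s'.canFuel j ≤ C) ∧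
      (∀ j : Fin N, j ≠ i → j ≠ mc → ¬((j : ℕ) < m) → s'.canFuel j = s.canFuel j) := by
  intro d
  induction d with
  | zero =>
    intro g hg s hp hcpi hcpmc hcfmc ht0 ht1 hbnd hstat
    have hgm : g = m + 1 := by omega
    refine ⟨s, .refl, hp, hcpi, ht0, ht1, ?_, hcfmc, fun j _ _ => rfl, hbnd,
      fun j _ _ _ => rfl⟩
    rw [hcpmc, hgm]; push_cast; ring
  | succ d ihd =>
    intro g hg s hp hcpi hcpmc hcfmc ht0 ht1 hbnd hstat
    have hgm : g ≤ m := by omega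
    obtain ⟨s₁, hr1, hp1, hcpi1, ht01, ht11, hcpmc1, hcfmc1, hcpo1, hbnd1, hcfo1⟩ :=
      segTrips hB hC m g hgm i mc hmci hmi hmmc (Nat.ceil (2 * C)) 0 s
        le_rfl (by linarith)
        (by
          have h1 : 2 * C ≤ (Nat.ceil (2 * C) : ℝ) := Nat.le_ceil _
          linarith)
        hp hcpi (by rw [hcpmc]; ring) hcfmc ht0 ht1 hbnd hstat
    obtain ⟨s₂, hr2, hp2, hcpi2, ht02, ht12, hcpmc2, hcfmc2, hcpo2, hbnd2, hcfo2⟩ :=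
      ihd (g + 1) (by omega) s₁ hp1 hcpi1 (by rw [hcpmc1]; push_cast; ring)
        hcfmc1 ht01 ht11 hbnd1
        (fun j hj => by
          have hji : j ≠ i := by intro h; apply absurd hmi; rw [← h]; omega
          have hjmc : j ≠ mc := by intro h; apply absurd hmmc; rw [← h]; omega
          rw [hcpo1 j hji hjmc, hstat j hj])
    refine ⟨s₂, hr1.trans hr2, hp2, hcpi2, ht02, ht12, hcpmc2, hcfmc2, ?_, hbnd2, ?_⟩
    · intro j hji hjmc; rw [hcpo2 j hji hjmc, hcpo1 j hji hjmc]
    · intro j hji hjmc hjm; rw [hcfo2 j hji hjmc hjm, hcfo1 j hji hjmc hjm]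

/-- Deploy can `m` from the base to its station at `(m+1)·C/2` and fill it,
turning the full configuration with `m` stations into one with `m+1`. -/
lemma buildStep (hB : 1 ≤ B) (hC : 0 < C) (m : ℕ) (i : Fin N)
    (hi : (i : ℕ) = N - 1) (hm : m + 2 ≤ N) (s : MaddexState N)
    (hp : s.pos = 0) (ht : s.tank = 1)
    (hposlt : ∀ j : Fin N, (j : ℕ) < m → s.canPos j = ((j : ℕ) + 1) * (C / 2))
    (hposge : ∀ j : Fin N, m ≤ (j : ℕ) → s.canPos j = 0)
    (hfuel : ∀ j, s.canFuel j = C) :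
    ∃ s', Reach C B s s' ∧ s'.pos = 0 ∧ s'.tank = 1 ∧
      (∀ j : Fin N, (j : ℕ) < m + 1 → s'.canPos j = ((j : ℕ) + 1) * (C / 2)) ∧
      (∀ j : Fin N, m + 1 ≤ (j : ℕ) → s'.canPos j = 0) ∧
      (∀ j, s'.canFuel j = C) := by
  have hmN : m < N := by omega
  have hiNN : (i : ℕ) = N - 1 := hi
  set mc : Fin N := ⟨m, hmN⟩ with hmcdef
  have hmcv : (mc : ℕ) = m := rfl
  have hmci : mc ≠ i := by
    intro h
    have : (mc : ℕ) = (i : ℕ) := by rw [h]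
    rw [hmcv, hi] at this; omega
  have hmi : m ≤ (i : ℕ) := by rw [hi]; omega
  -- waste the content of can `mc`
  obtain ⟨s₁, hr1, hp1, ht01, ht11, hcfmc1, hcp1, hcfo1⟩ :=
    burn (C := C) (B := B) (Nat.ceil C) s mc
      (by rw [hposge mc (by rw [hmcv]), hp]) (by rw [ht]; norm_num)
      (by rw [ht]) (by rw [hfuel mc]; linarith)
      (by rw [hfuel mc]; exact Nat.le_ceil C)
  rw [hp] at hp1
  -- transport it to node m+1
  obtain ⟨s₂, hr2, hp2, hcpi2, ht02, ht12, hcpmc2, hcfmc2, hcpo2, hbnd2, hcfo2⟩ :=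
    transport hB hC m i mc hmci hmi (by rw [hmcv]) (m + 1) 0 (by omega) s₁
      hp1 (by rw [hcp1 i, hposge i (by omega)])
      (by rw [hcp1 mc, hposge mc (by rw [hmcv])]; norm_num) hcfmc1 ht01 ht11
      (fun j => by
        by_cases hj : j = mc
        · subst hj; rw [hcfmc1]; exact ⟨le_rfl, by linarith⟩
        · rw [hcfo1 j hj, hfuel j]; exact ⟨by linarith, le_rfl⟩)
      (fun j hj => by rw [hcp1 j, hposlt j hj])
  -- fill the new station (and re-fill the old ones)
  obtain ⟨s₃, hr3, hp3, hcpi3, ht03, ht13, hbnd3, hfull3, hcpo3, hcfo3⟩ :=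
    restore hB hC (m + 1) s₂ i (by omega) hp2 hcpi2 ht02 ht12 hbnd2
      (fun j hj => by
        by_cases hjmc : j = mc
        · subst hjmc; rw [hcpmc2, hmcv]
        · have hji : j ≠ i := by intro h; rw [h, hi] at hj; omega
          have hjm : (j : ℕ) < m := by
            rcases Nat.lt_or_ge (j : ℕ) m with h | h
            · exact h
            · exact absurd (Fin.ext (by omega) : j = mc) hjmc
          rw [hcpo2 j hji hjmc, hcp1 j, hposlt j hjm])
  -- refill everything at the base
  obtain ⟨s₄, hr4, hp4, ht4, hcp4, hcfz4, hcfnz4⟩ :=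
    refillAll (C := C) (B := B) s₃ hp3 ht13 (fun j => (hbnd3 j).2)
  -- collect the facts
  have hcpos3 : ∀ j : Fin N, (j : ℕ) < m + 1 → s₃.canPos j = ((j : ℕ) + 1) * (C / 2) := by
    intro j hj
    by_cases hjmc : j = mc
    · subst hjmc
      rw [hcpo3 mc hmci, hcpmc2, hmcv]
    · have hji : j ≠ i := by intro h; rw [h, hi] at hj; omega
      have hjm : (j : ℕ) < m := by
        rcases Nat.lt_or_ge (j : ℕ) m with h | h
        · exact h
        · exact absurd (Fin.ext (by omega) : j = mc) hjmc
      rw [hcpo3 j hji, hcpo2 j hji hjmc, hcp1 j, hposlt j hjm]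
  have hcpos3' : ∀ j : Fin N, m + 1 ≤ (j : ℕ) → s₃.canPos j = 0 := by
    intro j hj
    by_cases hji : j = i
    · subst hji; exact hcpi3
    · have hjmc : j ≠ mc := by intro h; rw [h, hmcv] at hj; omega
      rw [hcpo3 j hji, hcpo2 j hji hjmc, hcp1 j, hposge j (by omega)]
  refine ⟨s₄, ((hr1.trans hr2).trans hr3).trans hr4, hp4, ht4, ?_, ?_, ?_⟩
  · intro j hj; rw [hcp4 j]; exact hcpos3 j hj
  · intro j hj; rw [hcp4 j]; exact hcpos3' j hj
  · intro j
    rcases Nat.lt_or_ge (j : ℕ) (m + 1) with h | h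
    · have hpos : s₃.canPos j = ((j : ℕ) + 1) * (C / 2) := hcpos3 j h
      have hne : s₃.canPos j ≠ 0 := by
        rw [hpos]
        have : (0:ℝ) < ((j : ℕ) + 1) * (C / 2) := by positivity
        exact ne_of_gt this
      rw [hcfnz4 j hne]; exact hfull3 j h
    · exact hcfz4 j (hcpos3' j h)

end MaddexAux

open MaddexAux in
/-- With `N ≥ 1` cans, there is a plan that reaches a state with jeep position
`D_N = (N·C + 1)/2` and subsequently a state with jeep position `0`: together
with the round-trip upper bound, the solution of Maddex' round-trip jeep
problem with `N` cans is exactly `D_N`. -/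
theorem maddex_roundtrip_reachable (N B : ℕ) (C : ℝ) (hC : 0 < C) (hB : 1 ≤ B)
    (hN : 1 ≤ N) :
    ∃ s₁ s₂ : MaddexState N,
      Relation.ReflTransGen (MaddexStep C B) (maddexInit N C) s₁ ∧
      Relation.ReflTransGen (MaddexStep C B) s₁ s₂ ∧
      s₁.pos = ((N : ℝ) * C + 1) / 2 ∧ s₂.pos = 0 := by
  have hN0 : 0 < N := hN
  set i : Fin N := ⟨N - 1, by omega⟩ with hidef
  have hiv : (i : ℕ) = N - 1 := rfl
  -- build the full configuration with stations 0, …, N-2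
  have hbuild : ∀ m : ℕ, m + 1 ≤ N →
      ∃ s, Reach C B (maddexInit N C) s ∧ s.pos = 0 ∧ s.tank = 1 ∧
        (∀ j : Fin N, (j : ℕ) < m → s.canPos j = ((j : ℕ) + 1) * (C / 2)) ∧
        (∀ j : Fin N, m ≤ (j : ℕ) → s.canPos j = 0) ∧
        (∀ j, s.canFuel j = C) := by
    intro m
    induction m with
    | zero =>
      intro _
      exact ⟨maddexInit N C, .refl, rfl, rfl,
        fun j hj => absurd hj (Nat.not_lt_zero _), fun j _ => rfl, fun j => rfl⟩
    | succ m ih =>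
      intro hm1
      obtain ⟨s, hr, hp, ht, hlt, hge, hf⟩ := ih (by omega)
      obtain ⟨s', hr', hp', ht', hlt', hge', hf'⟩ :=
        buildStep hB hC m i hiv (by omega) s hp ht hlt hge hf
      exact ⟨s', hr.trans hr', hp', ht', hlt', hge', hf'⟩
  obtain ⟨sF, hrF, hpF, htF, hltF, hgeF, hfF⟩ := hbuild (N - 1) (by omega)
  -- outbound through all stations
  obtain ⟨sO, hrO, hpO, htO, hcpiO, hcfiO, hstatO, hcpoO, hcfoO⟩ :=
    outLegs hB hC (N - 1) sF i (by rw [hiv]) hpF htF (hgeF i (by rw [hiv])) (hfF i)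
      (fun j hj => ⟨hltF j hj, hfF j⟩)
  -- final leg out to the farthest point
  have hL0 : (0:ℝ) ≤ (C + 1) / 2 := by linarith
  obtain ⟨s₁, hr1, hp1, hcpi1, ht1, hcfi1, hoth1⟩ :=
    leg (C := C) hB (Nat.ceil ((C + 1) / 2)) sO i 1 ((C + 1) / 2) (Or.inl rfl)
      hcpiO (by rw [htO]; norm_num) (by rw [htO]) (by rw [hcfiO]; linarith)
      hL0 (by rw [htO, hcfiO]; linarith) (Nat.le_ceil _)
  rw [htO, hcfiO] at ht1 hcfi1
  have hw1 : 1 + C - (C + 1) / 2 = (C + 1) / 2 := by ring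
  rw [hw1] at ht1 hcfi1
  have hcastN : ((N - 1 : ℕ) : ℝ) = (N : ℝ) - 1 := by
    rw [Nat.cast_sub hN]; norm_num
  have hp1' : s₁.pos = ((N : ℝ) * C + 1) / 2 := by
    rw [hp1, hpO, hcastN]; ring
  -- bounds at the farthest point
  have hm1 : min C ((C + 1) / 2) ≤ (C + 1) / 2 := min_le_right _ _
  have hm2 : 0 ≤ min C ((C + 1) / 2) := le_min (by linarith) (by linarith)
  have ht10 : 0 ≤ s₁.tank := by rw [ht1]; linarith
  have ht11 : s₁.tank ≤ 1 := by
    rw [ht1]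
    rcases le_total C ((C + 1) / 2) with h | h
    · rw [min_eq_left h]; linarith
    · rw [min_eq_right h]; linarith
  -- leg back to the last station
  obtain ⟨s₂, hr2, hp2, hcpi2, ht2, hcfi2, hoth2⟩ :=
    leg (C := C) hB (Nat.ceil ((C + 1) / 2)) s₁ i (-1) ((C + 1) / 2) (Or.inr rfl)
      hcpi1 ht10 ht11 (by rw [hcfi1]; exact hm2) hL0
      (by rw [ht1, hcfi1]; linarith) (Nat.le_ceil _)
  have hw2 : s₁.tank + s₁.canFuel i - (C + 1) / 2 = 0 := by
    rw [ht1, hcfi1]; ring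
  rw [hw2] at ht2 hcfi2
  have hcfi2' : s₂.canFuel i = 0 := by
    rw [hcfi2, min_eq_right (by rw [hcfi1]; exact hm2)]
  have ht2' : s₂.tank = 0 := by
    rw [ht2, min_eq_right (by rw [hcfi1]; exact hm2)]; ring
  have hp2' : s₂.pos = ((N - 1 : ℕ) : ℝ) * (C / 2) := by
    rw [hp2, hp1, hpO]; ring
  -- inbound through all stations
  obtain ⟨s₃, hr3, hp3, hcpi3, _, _, _, _, _, _, _⟩ :=
    inLegs hB hC (N - 1) s₂ i (by rw [hiv]) hp2' hcpi2
      (by rw [ht2']) (by rw [ht2']; norm_num) (by rw [hcfi2'])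
      (by rw [hcfi2']; linarith)
      (fun j hj => by
        have hji : j ≠ i := by
          intro h
          rw [h, hiv] at hj
          omega
        constructor
        · rw [(hoth2 j hji).1, (hoth1 j hji).1, hcpoO j hji, hltF j hj]
        · rw [(hoth2 j hji).2, (hoth1 j hji).2, hstatO j hj])
  exact ⟨s₁, s₃, (hrF.trans hrO).trans hr1, hr2.trans hr3, hp1', hp3⟩
end
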